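/- arXiv:1110.0818 — 6 statements merged into one kernel-verified Lean document; each statement's English description precedes it below -/
import Mathlib

section
/- Let A be an invertible n×n complex matrix such that AᵀA = Δ is a diagonal matrix with diagonal entries z₁,…,zₙ. Fix v rows i₁,…,i_v and v columns k₁,…,k_v, let A_(v) be the corresponding v×v submatrix, let A^(v) be the complementary (n−v)×(n−v) submatrix (to rows i_{v+1},…,i_n and columns k_{v+1},…,k_n), and let σ be the permutation mapping i_j to k_j. Then det A_(v) = sgn(σ) · (∏_{j=1}^v z_{k_j}) / det A · det A^(v). -/
/-!
Reorder rows and columns of `A` so that `A_(v)` and `A^(v)` become the diagonal blocks of a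
matrix `B` indexed by `Fin v ⊕ Fin (n - v)`; this multiplies the determinant by `sgn σ` and keeps
`Bᵀ B` diagonal. Jacobi's complementary minor identity gives `det B₁₁ = det B · det (B⁻¹)₂₂`, and
`Bᵀ B = Δ` makes `B⁻¹ = Δ⁻¹ Bᵀ`, so `det (B⁻¹)₂₂ = det B₂₂ / ∏_{j > v} z_{k_j}`. Finally
`(det B)² = ∏ z` turns `det B / ∏_{j > v} z_{k_j}` into `∏_{j ≤ v} z_{k_j} / det B`.
-/

open Matrix

theorem Int.cast_units_mul_self {R : Type*} [Ring R] (u : ℤˣ) : ((u : ℤ) : R) * u = 1 := by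
  rw [← Int.cast_mul, ← Units.val_mul, Int.units_mul_self, Units.val_one, Int.cast_one]

namespace Matrix

variable {R K : Type*} {m p n : Type*} [Fintype m] [Fintype p] [Fintype n]
  [DecidableEq m] [DecidableEq p] [DecidableEq n]

theorem det_toBlocks₁₁_eq_det_mul_det_inv_toBlocks₂₂ [CommRing R]
    (B : Matrix (m ⊕ p) (m ⊕ p) R) (hB : IsUnit B.det) :
    B.toBlocks₁₁.det = B.det * B⁻¹.toBlocks₂₂.det := by
  have hmul : fromBlocks B.toBlocks₁₁ B.toBlocks₁₂ B.toBlocks₂₁ B.toBlocks₂₂ *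
      fromBlocks B⁻¹.toBlocks₁₁ B⁻¹.toBlocks₁₂ B⁻¹.toBlocks₂₁ B⁻¹.toBlocks₂₂ =
      fromBlocks 1 0 0 1 := by
    rw [fromBlocks_toBlocks, fromBlocks_toBlocks, mul_nonsing_inv B hB, fromBlocks_one]
  rw [fromBlocks_multiply, fromBlocks_inj] at hmul
  obtain ⟨-, h₁₂, -, h₂₂⟩ := hmul
  have key : B * fromBlocks 1 B⁻¹.toBlocks₁₂ 0 B⁻¹.toBlocks₂₂ =
      fromBlocks B.toBlocks₁₁ 0 B.toBlocks₂₁ 1 := by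
    nth_rw 1 [← fromBlocks_toBlocks B]
    rw [fromBlocks_multiply, h₁₂, h₂₂]
    simp
  simpa [det_fromBlocks_zero₂₁, det_fromBlocks_zero₁₂] using (congrArg det key).symm

theorem inv_eq_diagonal_inv_mul_transpose [Field K] {B : Matrix n n K} {w : n → K}
    (hBw : Bᵀ * B = diagonal w) (hw : ∀ x, w x ≠ 0) : B⁻¹ = diagonal w⁻¹ * Bᵀ := by
  refine inv_eq_left_inv ?_
  rw [Matrix.mul_assoc, hBw, diagonal_mul_diagonal, ← diagonal_one]
  exact congrArg diagonal (funext fun x => inv_mul_cancel₀ (hw x))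

theorem det_toBlocks₁₁_of_transpose_mul_self_eq_diagonal [Field K]
    {B : Matrix (m ⊕ p) (m ⊕ p) K} (hB : IsUnit B.det) {w : m ⊕ p → K}
    (hBw : Bᵀ * B = diagonal w) :
    B.toBlocks₁₁.det = (∏ a, w (Sum.inl a)) / B.det * B.toBlocks₂₂.det := by
  have hprod : ∏ x, w x = B.det ^ 2 := by
    rw [← det_diagonal, ← hBw, det_mul, det_transpose, sq]
  have hB0 := hB.ne_zero
  have hw (x) : w x ≠ 0 :=
    Finset.prod_ne_zero_iff.mp (hprod ▸ pow_ne_zero 2 hB0) x (Finset.mem_univ x)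
  have hinv₂₂ : B⁻¹.toBlocks₂₂ = diagonal (fun a => (w (Sum.inr a))⁻¹) * B.toBlocks₂₂ᵀ := by
    ext a b
    simp [toBlocks₂₂, inv_eq_diagonal_inv_mul_transpose hBw hw]
  rw [det_toBlocks₁₁_eq_det_mul_det_inv_toBlocks₂₂ B hB, hinv₂₂, det_mul, det_diagonal,
    det_transpose, Finset.prod_inv_distrib]
  have hw₂ : ∏ a, w (Sum.inr a) ≠ 0 := Finset.prod_ne_zero_iff.mpr fun a _ => hw _
  rw [Fintype.prod_sum_type] at hprod
  field_simp
  linear_combination -B.toBlocks₂₂.det * hprod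

theorem det_submatrix_equiv [CommRing R] {ι : Type*} [Fintype ι] [DecidableEq ι]
    (A : Matrix n n R) (r c : ι ≃ n) :
    (A.submatrix r c).det = Equiv.Perm.sign (r.symm.trans c) * A.det := by
  have : A.submatrix r c = (A.submatrix id (r.symm.trans c)).submatrix r r := by
    ext a b; simp
  rw [this, det_submatrix_equiv_self, det_permute']

end Matrix

/-- **Proposition 2.1.** Let `A` be an invertible `n × n` complex matrix with `Aᵀ A = Δ(z₁,…,zₙ)`
diagonal.  Choose orderings `i, k` of the rows and columns; let `A_(v)` be the `v × v` submatrix on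
rows `i₁,…,i_v` and columns `k₁,…,k_v`, `A^(v)` the complementary `(n-v) × (n-v)` submatrix on rows
`i_{v+1},…,i_n` and columns `k_{v+1},…,k_n`, and `σ` the permutation with `σ(i_j) = k_j`.  Then
`det A_(v) = sgn σ · (∏_{j=1}^v z_{k_j}) / det A · det A^(v)`. -/
theorem submatrix_det_complement (n v : ℕ) (hv : v ≤ n)
    (A : Matrix (Fin n) (Fin n) ℂ) (hA : IsUnit A.det)
    (z : Fin n → ℂ) (hdiag : Aᵀ * A = Matrix.diagonal z)
    (i k : Equiv.Perm (Fin n))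
    (Asub : Matrix (Fin v) (Fin v) ℂ)
    (hAsub : Asub = A.submatrix (fun a : Fin v => i (Fin.castLE hv a))
      (fun b : Fin v => k (Fin.castLE hv b)))
    (Acomp : Matrix (Fin (n - v)) (Fin (n - v)) ℂ)
    (hAcomp : Acomp = A.submatrix
      (fun a : Fin (n - v) => i ⟨v + a.1, by omega⟩)
      (fun b : Fin (n - v) => k ⟨v + b.1, by omega⟩))
    (σ : Equiv.Perm (Fin n)) (hσ : σ = i.symm.trans k) :
    Asub.det = (Equiv.Perm.sign σ : ℂ) *
      (∏ j : Fin v, z (k (Fin.castLE hv j))) / A.det * Acomp.det := by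
  let e : Fin v ⊕ Fin (n - v) ≃ Fin n := finSumFinEquiv.trans (finCongr (by omega))
  let B := A.submatrix (e.trans i) (e.trans k)
  have he₁ (a : Fin v) : e (Sum.inl a) = Fin.castLE hv a := Fin.ext (by simp [e])
  have he₂ (a : Fin (n - v)) : e (Sum.inr a) = ⟨v + a, by omega⟩ := Fin.ext (by simp [e])
  have hσB : (e.trans i).symm.trans (e.trans k) = σ := by
    ext; simp [hσ]
  have hdetB : B.det = Equiv.Perm.sign σ * A.det := by
    rw [det_submatrix_equiv, hσB]
  have hsign : (Equiv.Perm.sign σ : ℂ) * Equiv.Perm.sign σ = 1 := Int.cast_units_mul_self _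
  have hBdiag : Bᵀ * B = diagonal (z ∘ e.trans k) := by
    rw [transpose_submatrix, submatrix_mul_equiv, hdiag, submatrix_diagonal_equiv]
  have hB : IsUnit B.det := by
    rw [hdetB]
    exact (IsUnit.of_mul_eq_one _ hsign).mul hA
  have h₁₁ : B.toBlocks₁₁ = Asub := by
    ext; simp [B, he₁, hAsub, toBlocks₁₁]
  have h₂₂ : B.toBlocks₂₂ = Acomp := by
    ext; simp [B, he₂, hAcomp, toBlocks₂₂]
  have hblocks := det_toBlocks₁₁_of_transpose_mul_self_eq_diagonal hB hBdiag
  rw [h₁₁, h₂₂, hdetB] at hblocks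
  rw [hblocks]
  simp only [Function.comp_apply, Equiv.trans_apply, he₁]
  have hs0 : (Equiv.Perm.sign σ : ℂ) ≠ 0 := left_ne_zero_of_mul_eq_one hsign
  field_simp
  linear_combination (-(∏ j : Fin v, z (k (Fin.castLE hv j))) * Acomp.det / A.det) * hsign
end

section
/- Let n ∈ ℕ and α a partition of n. For a partition μ = (1^{m₁}, 2^{m₂}, …) let b_μ = ∏_i m_i!. Then the determinant of the submatrix X^(α) = (χ^λ_μ)_{λ,μ ≥ α} of the character table of S_n (rows and columns indexed by partitions λ, μ of n that are ≥ α in lexicographic order) equals ∏_{μ ≥ α} b_μ. -/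
open scoped Classical

namespace SnTable

variable {n : ℕ}

/-- The parts of a partition, listed in weakly decreasing order. -/
def descList (μ : Nat.Partition n) : List ℕ := (μ.parts.sort (· ≤ ·)).reverse

/-- Strict lexicographic order on partitions of `n` (comparing the lists of parts
written in decreasing order). -/
def plex (μ ν : Nat.Partition n) : Prop := List.Lex (· < ·) (descList μ) (descList ν)

/-- Weak lexicographic order on partitions of `n`. -/
def plexLE (μ ν : Nat.Partition n) : Prop := μ = ν ∨ plex μ ν

/-- `a_μ = ∏ i^{m_i(μ)}`, the product of the parts of `μ`. -/
def aNum (μ : Nat.Partition n) : ℕ := μ.parts.prod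

/-- `b_μ = ∏ m_i(μ)!`, the product of the factorials of the multiplicities. -/
def bNum (μ : Nat.Partition n) : ℕ :=
  ∏ i ∈ μ.parts.toFinset, (μ.parts.count i).factorial

/-- `z_μ = a_μ b_μ`, the centralizer order of an element of cycle type `μ` in `S_n`. -/
def zNum (μ : Nat.Partition n) : ℕ := aNum μ * bNum μ

/-- The cycle type of a permutation of `Fin n`, as a partition of `n`. -/
def cycleTypePartition (g : Equiv.Perm (Fin n)) : Nat.Partition n :=
  (Fintype.card_fin n) ▸ g.partition

/-- The value at `g` of the permutation character `ξ^λ` of `S_n` obtained by inducing the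
trivial character from the Young subgroup `S_λ`: it counts the ordered set partitions of
`Fin n` with block sizes `λ₁ ≥ λ₂ ≥ …` that are fixed by `g`. -/
def permChar (lam : Nat.Partition n) (g : Equiv.Perm (Fin n)) : ℕ :=
  Fintype.card {f : Fin n → Fin (descList lam).length //
    (∀ x, f (g x) = f x) ∧
    ∀ j, (Finset.univ.filter fun x => f x = j).card = (descList lam).get j}

/-- `X` is the character table of the symmetric group `S_n`, with rows and columns indexed
by the partitions of `n`: each row is an irreducible character (as a class function, via
cycle types), distinct rows are distinct characters, and the labelling is the standard one,
pinned down by the fact that the transition matrix expressing the Young permutation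
characters `ξ^λ` in terms of the rows of `X` is unitriangular with respect to the
lexicographic order. -/
def IsCharTable (X : Nat.Partition n → Nat.Partition n → ℤ) : Prop :=
  (∀ lam : Nat.Partition n, ∃ V : FDRep ℂ (Equiv.Perm (Fin n)),
      CategoryTheory.Simple V ∧
      ∀ g : Equiv.Perm (Fin n), V.character g = (X lam (cycleTypePartition g) : ℂ)) ∧
  (∃ d : Nat.Partition n → Nat.Partition n → ℤ,
      (∀ lam, d lam lam = 1) ∧
      (∀ lam mu, d lam mu ≠ 0 → plexLE lam mu) ∧
      (∀ lam (g : Equiv.Perm (Fin n)),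
        (permChar lam g : ℤ) = ∑ mu, d lam mu * X mu (cycleTypePartition g))) ∧
  Function.Injective X

end SnTable

/-!
Let `ξ^λ` be the Young permutation characters. By hypothesis `ξ^λ = ∑_ν d_{λν} χ^ν` with `d`
unitriangular, and `d_{λν} ≠ 0` forces `ν ≥ λ`; so for `λ, μ ≥ α` the matrix
`(ξ^λ(μ))_{λ,μ ≥ α}` factors as `d^(α) X^(α)` with `det d^(α) = 1`.

The value `ξ^λ(g)` counts the ways of distributing the cycles of `g` (fixed points included)
into blocks of sizes `λ₁ ≥ λ₂ ≥ ⋯`. If there is one, the `k` longest cycles land in at most `k`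
blocks, so the cycle type `μ` of `g` is dominated by `λ`, and hence `μ ≤ λ` lexicographically:
the matrix `(ξ^λ(μ))` is triangular. On the diagonal every block must be filled by a single
cycle of its own length, which leaves `∏ m_i! = b_μ` distributions.
-/

open Finset Equiv

namespace List

theorem sum_take_eq_sum_filter {M : Type*} [AddCommMonoid M] (l : List M) (k : ℕ) :
    (l.take k).sum = ∑ i ∈ univ.filter (fun i : Fin l.length => (i : ℕ) < k), l.get i := by
  induction l generalizing k with
  | nil => simp
  | cons a l ih =>
    cases k with
    | zero => simp
    | succ k => simp [Finset.sum_filter, Fin.sum_univ_succ, ih]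

theorem antitone_getD_zero {l : List ℕ} (hl : l.Pairwise (· ≥ ·)) : Antitone (l.getD · 0) := by
  intro i j hij
  rcases lt_or_ge j l.length with hj | hj
  · simpa [hj, hij.trans_lt hj] using
      hl.rel_get_of_le (a := ⟨i, hij.trans_lt hj⟩) (b := ⟨j, hj⟩) hij
  · simp [hj]

theorem sum_le_sum_take_of_card_le {l : List ℕ} (hl : l.Pairwise (· ≥ ·))
    {s : Finset (Fin l.length)} {k : ℕ} (hs : #s ≤ k) : ∑ i ∈ s, l.get i ≤ (l.take k).sum := by
  set r := univ.filter (fun i : Fin l.length => (i : ℕ) < k)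
  have hcard : #(s \ r) ≤ #(r \ s) := by
    have h₁ := card_sdiff_add_card_inter s r
    have h₂ := card_sdiff_add_card_inter r s
    have h₃ : #s ≤ #r := by
      rw [Fin.card_filter_val_lt]; exact le_min (card_le_univ s |>.trans (by simp)) hs
    rw [inter_comm] at h₂; omega
  have hget (i : Fin l.length) : l.get i = l.getD i 0 := by simp
  -- Exchange argument: the entries of `s` beyond position `k` are matched by at least as many
  -- unused entries among the first `k`, each of which is at least as large.
  have hout : ∀ i ∈ s \ r, l.get i ≤ l.getD k 0 := fun i hi => by
    rw [hget]; exact antitone_getD_zero hl (by simpa [r] using (Finset.mem_sdiff.1 hi).2)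
  have hin : ∀ i ∈ r \ s, l.getD k 0 ≤ l.get i := fun i hi => by
    have hik := (Finset.mem_sdiff.1 hi).1
    simp only [r, Finset.mem_filter, Finset.mem_univ, true_and] at hik
    rw [hget]; exact antitone_getD_zero hl hik.le
  rw [sum_take_eq_sum_filter, ← Finset.sum_inter_add_sum_sdiff s r,
    ← Finset.sum_inter_add_sum_sdiff r s, inter_comm]
  refine Nat.add_le_add_left ?_ _
  calc ∑ i ∈ s \ r, l.get i ≤ #(s \ r) • l.getD k 0 := Finset.sum_le_card_nsmul _ _ _ hout
    _ ≤ #(r \ s) • l.getD k 0 := by gcongr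
    _ ≤ ∑ i ∈ r \ s, l.get i := Finset.card_nsmul_le_sum _ _ _ hin

theorem exists_sum_take_lt_of_lex {l₁ l₂ : List ℕ} (h : List.Lex (· < ·) l₁ l₂)
    (hpos : ∀ b ∈ l₂, 0 < b) : ∃ k, (l₁.take k).sum < (l₂.take k).sum := by
  induction h with
  | nil => exact ⟨1, by simpa using hpos _ List.mem_cons_self⟩
  | rel hab => exact ⟨1, by simpa using hab⟩
  | cons _ ih =>
    obtain ⟨k, hk⟩ := ih fun b hb => hpos b (List.mem_cons_of_mem _ hb)
    exact ⟨k + 1, by simpa using hk⟩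

end List

theorem Matrix.det_eq_prod_diag_of_eq_unitriangular_mul {S R : Type*} [Fintype S]
    [DecidableEq S] [LinearOrder S] [CommRing R] {A C D : Matrix S S R}
    (hA : A.IsLowerTriangular) (hD : D.IsUpperTriangular) (hD_diag : ∀ i, D i i = 1)
    (h : A = D * C) : C.det = ∏ i, A i i := by
  rw [← det_of_isLowerTriangular A hA, h, det_mul, det_of_isUpperTriangular hD,
    prod_eq_one fun i _ => hD_diag i, one_mul]

theorem Fintype.card_subtype_eq_count_map {Q β : Type*} [Fintype Q] [DecidableEq β] (w : Q → β)
    (b : β) : Fintype.card {q // w q = b} = (univ.val.map w).count b := by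
  rw [Fintype.card_subtype, Multiset.count_map, card_def, filter_val]
  simp_rw [eq_comm]

theorem Fintype.exists_equiv_of_map_univ_eq {Q Q' β : Type*} [Fintype Q] [Fintype Q']
    [DecidableEq β] {w : Q → β} {w' : Q' → β} (h : univ.val.map w = univ.val.map w') :
    ∃ E : Q ≃ Q', ∀ q, w' (E q) = w q :=
  ⟨ofFiberEquiv fun b => Fintype.equivOfCardEq (by simp only [card_subtype_eq_count_map, h]),
    ofFiberEquiv_map _⟩

namespace Equiv.Perm

variable {α : Type*}

theorem sum_filter_apply_eq [Fintype α] [DecidableEq α] {M : Type*} [AddCommMonoid M]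
    (σ : Perm α) (f : α → M) (a : α) : ∑ x with σ x = a, f x = f (σ.symm a) := by
  simp [Finset.sum_filter, ← Equiv.eq_symm_apply]

theorem apply_zpow_apply_of_invariant {β : Type*} {g : Perm α} {f : α → β}
    (hf : ∀ x, f (g x) = f x) (i : ℤ) (x : α) : f ((g ^ i) x) = f x := by
  induction i using Int.induction_on generalizing x with
  | zero => rfl
  | succ i ih => rw [zpow_add_one, mul_apply, ih, hf]
  | pred i ih => rw [zpow_sub_one, mul_apply, ih, ← hf, ← mul_apply, mul_inv_cancel, one_apply]

variable [Fintype α] (g : Perm α)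

/-- The cycles of `g`, fixed points included as cycles of length one. -/
abbrev Cycles : Type _ := Quotient (SameCycle.setoid g)

noncomputable def cycleCard (c : g.Cycles) : ℕ := #{x | Quotient.mk _ x = c}

def invariantFunEquiv (β : Type*) : {f : α → β // ∀ x, f (g x) = f x} ≃ (g.Cycles → β) where
  toFun f := Quotient.lift f.1 fun _ _ ⟨i, hi⟩ => hi ▸ (apply_zpow_apply_of_invariant f.2 i _).symm
  invFun F := ⟨fun x => F (Quotient.mk _ x),
    fun x => congrArg F (Quotient.sound (sameCycle_apply_left.mpr (SameCycle.refl g x)))⟩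
  left_inv _ := rfl
  right_inv _ := funext (Quotient.ind fun _ => rfl)

theorem card_filter_mk_eq {ι : Type*} [DecidableEq ι] (F : g.Cycles → ι) (j : ι) :
    #{x | F (Quotient.mk _ x) = j} = ∑ c with F c = j, g.cycleCard c := by
  simp_rw [cycleCard, card_eq_sum_ones]
  rw [sum_fiberwise_eq_sum_filter]
  simp

variable [DecidableEq α]

noncomputable def cycleOrFixed (x : α) : g.cycleFactorsFinset ⊕ Function.fixedPoints g :=
  if h : g x = x then .inr ⟨x, h⟩
  else .inl ⟨g.cycleOf x, cycleOf_mem_cycleFactorsFinset_iff.mpr (mem_support.mpr h)⟩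

variable {g} in
theorem cycleOrFixed_eq_iff {x y : α} :
    g.cycleOrFixed x = g.cycleOrFixed y ↔ g.SameCycle x y := by
  by_cases hx : g x = x <;> by_cases hy : g y = y <;>
    simp only [cycleOrFixed, hx, hy, dif_pos, dif_neg, not_false_eq_true, Sum.inl.injEq,
      Sum.inr.injEq, reduceCtorEq, false_iff, Subtype.mk.injEq]
  · exact ⟨fun h => by cases h; rfl, fun h => Subtype.ext (h.eq_of_left hx)⟩
  · exact fun h => hy (h.apply_eq_self_iff.mp hx)
  · exact fun h => hx (h.apply_eq_self_iff.mpr hy)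
  · exact (sameCycle_iff_cycleOf_eq_of_mem_support (mem_support.mpr hx)
      (mem_support.mpr hy)).symm

noncomputable def cyclesEquiv : g.Cycles ≃ g.cycleFactorsFinset ⊕ Function.fixedPoints g :=
  Equiv.ofBijective (Quotient.lift g.cycleOrFixed fun _ _ => cycleOrFixed_eq_iff.mpr)
    ⟨Quotient.ind₂ fun _ _ h => Quotient.sound (cycleOrFixed_eq_iff.mp h), by
      rintro (⟨c, hc⟩ | ⟨x, hx⟩)
      · obtain ⟨a, ha⟩ := (mem_cycleFactorsFinset_iff.mp hc).1.nonempty_support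
        have hga : g a ≠ a := mem_support.mp (mem_cycleFactorsFinset_support_le hc ha)
        exact ⟨Quotient.mk _ a, by simp [cycleOrFixed, hga, cycle_is_cycleOf ha hc]⟩
      · exact ⟨Quotient.mk _ x, by simp [cycleOrFixed, show g x = x from hx]⟩⟩

theorem cyclesEquiv_mk (x : α) : g.cyclesEquiv (Quotient.mk _ x) = g.cycleOrFixed x := rfl

theorem cycleCard_mk (x : α) :
    g.cycleCard (Quotient.mk _ x) = if g x = x then 1 else (g.cycleOf x).support.card := by
  have hmk (y : α) : Quotient.mk (SameCycle.setoid g) y = Quotient.mk _ x ↔ g.SameCycle x y :=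
    Quotient.eq.trans ⟨SameCycle.symm, SameCycle.symm⟩
  split_ifs with hx
  · rw [cycleCard, card_eq_one]
    refine ⟨x, ?_⟩
    ext y
    simpa [hmk] using ⟨fun h => (h.eq_of_left hx).symm, fun h => h ▸ SameCycle.refl g x⟩
  · rw [cycleCard]
    congr 1
    ext y
    rw [mem_filter, mem_support_cycleOf_iff, hmk]
    simp [hx]

theorem map_cycleCard_univ : univ.val.map g.cycleCard = g.partition.parts := by
  have hcomp : g.cycleCard =
      Sum.elim (fun c => c.1.support.card) (fun _ => 1) ∘ g.cyclesEquiv := by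
    ext c
    induction c using Quotient.ind with | _ x => ?_
    by_cases hx : g x = x <;> simp [cycleCard_mk, cyclesEquiv_mk, cycleOrFixed, hx]
  rw [hcomp, ← Multiset.map_map, Multiset.map_univ_val_equiv, ← univ_disjSum_univ, val_disjSum,
    Multiset.disjSum, Multiset.map_add, Multiset.map_map, Multiset.map_map]
  have hcycles :
      univ.val.map (fun c : g.cycleFactorsFinset => c.1.support.card) = g.cycleType := by
    rw [cycleType_def, univ_eq_attach, attach_val]
    exact Multiset.attach_map_val' _ (card ∘ support)
  have hfixed : univ.val.map (fun _ : Function.fixedPoints g => 1) =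
      Multiset.replicate (Fintype.card α - #g.support) 1 := by
    rw [Multiset.map_const', card_val, card_univ, card_fixedPoints, sum_cycleType]
  simpa [parts_partition] using congrArg₂ (· + ·) hcycles hfixed

end Equiv.Perm

namespace SnTable

variable {n : ℕ}

section MergeCount

variable {Q Q' : Type*} [Fintype Q] [Fintype Q']

noncomputable def mergeCount (w : Q → ℕ) (L : List ℕ) : ℕ :=
  Nat.card {F : Q → Fin L.length // ∀ j, ∑ q with F q = j, w q = L.get j}

theorem mergeCount_congr {w : Q → ℕ} {w' : Q' → ℕ} (E : Q ≃ Q') (hE : ∀ q, w' (E q) = w q)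
    (L : List ℕ) : mergeCount w L = mergeCount w' L := by
  refine Nat.card_congr ((E.arrowCongr (Equiv.refl _)).subtypeEquiv fun F =>
    forall_congr' fun j => ?_)
  rw [sum_filter, sum_filter, ← E.sum_comp]
  simp [hE]

theorem mergeCount_eq_of_map_univ_eq {w : Q → ℕ} {w' : Q' → ℕ}
    (h : univ.val.map w = univ.val.map w') (L : List ℕ) : mergeCount w L = mergeCount w' L :=
  have ⟨E, hE⟩ := Fintype.exists_equiv_of_map_univ_eq h
  mergeCount_congr E hE L

theorem sum_take_le_of_mergeCount_ne_zero {B L : List ℕ} (hL : L.Pairwise (· ≥ ·))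
    (h : mergeCount B.get L ≠ 0) (k : ℕ) : (B.take k).sum ≤ (L.take k).sum := by
  obtain ⟨⟨F, hF⟩⟩ := (Nat.card_ne_zero.mp h).1
  set R := univ.filter (fun r : Fin B.length => (r : ℕ) < k)
  calc (B.take k).sum = ∑ r ∈ R, B.get r := B.sum_take_eq_sum_filter k
    _ ≤ ∑ r with F r ∈ R.image F, B.get r :=
        sum_le_sum_of_subset fun r hr => mem_filter.mpr ⟨mem_univ r, mem_image_of_mem F hr⟩
    _ = ∑ j ∈ R.image F, L.get j := by
        rw [← sum_fiberwise_eq_sum_filter]; exact sum_congr rfl fun j _ => hF j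
    _ ≤ (L.take k).sum := by
        refine List.sum_le_sum_take_of_card_le hL (card_image_le.trans ?_)
        simp [R, Fin.card_filter_val_lt]

theorem mergeCount_get_self {L : List ℕ} (hL : ∀ a ∈ L, 0 < a) :
    mergeCount L.get L = Nat.card {σ : Perm (Fin L.length) // L.get ∘ σ = L.get} := by
  let toMerge (σ : {σ : Perm (Fin L.length) // L.get ∘ σ = L.get}) :
      {F : Fin L.length → Fin L.length // ∀ j, ∑ q with F q = j, L.get q = L.get j} :=
    ⟨σ.1, fun j => by
      rw [Perm.sum_filter_apply_eq, ← congrFun σ.2, Function.comp_apply, σ.1.apply_symm_apply]⟩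
  refine (Nat.card_congr (Equiv.ofBijective toMerge
    ⟨fun σ τ h => Subtype.ext (Equiv.ext (congrFun (congrArg Subtype.val h))), ?_⟩)).symm
  rintro ⟨F, hF⟩
  -- Every block has positive weight, so `F` is onto, hence a permutation.
  have hsurj : Function.Surjective F := fun j => by
    obtain ⟨r, hr, -⟩ := exists_ne_zero_of_sum_ne_zero ((hF j).trans_ne (hL _ (L.get_mem j)).ne')
    exact ⟨r, (mem_filter.mp hr).2⟩
  let σ := Equiv.ofBijective F ⟨Finite.injective_iff_surjective.mpr hsurj, hsurj⟩
  refine ⟨⟨σ, funext fun r => ?_⟩, rfl⟩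
  have := hF (σ r)
  rw [show F = σ from rfl, Perm.sum_filter_apply_eq, σ.symm_apply_apply] at this
  exact this.symm

end MergeCount

theorem coe_descList (μ : Nat.Partition n) : (descList μ : Multiset ℕ) = μ.parts := by
  rw [descList, Multiset.coe_reverse, Multiset.sort_eq]

theorem descList_injective : Function.Injective (descList (n := n)) := fun μ ν h =>
  Nat.Partition.ext (by rw [← coe_descList μ, ← coe_descList ν, h])

theorem pairwise_descList (μ : Nat.Partition n) : (descList μ).Pairwise (· ≥ ·) :=
  List.pairwise_reverse.mpr (μ.parts.pairwise_sort _)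

theorem pos_of_mem_descList {μ : Nat.Partition n} {i : ℕ} (hi : i ∈ descList μ) : 0 < i :=
  μ.parts_pos (by rwa [← coe_descList μ])

theorem map_get_descList (μ : Nat.Partition n) : univ.val.map (descList μ).get = μ.parts := by
  rw [Fin.univ_val_map, List.ofFn_get, coe_descList]

theorem plexLE_iff_le {μ ν : Nat.Partition n} : plexLE μ ν ↔ descList μ ≤ descList ν := by
  rw [plexLE, plex, List.lex_lt, le_iff_eq_or_lt, descList_injective.eq_iff]

theorem plexLE_of_sum_take_le {μ ν : Nat.Partition n}
    (h : ∀ k, ((descList μ).take k).sum ≤ ((descList ν).take k).sum) : plexLE μ ν := by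
  rw [plexLE_iff_le, ← not_lt]
  intro hlt
  obtain ⟨k, hk⟩ := List.exists_sum_take_lt_of_lex hlt fun _ hb => pos_of_mem_descList hb
  exact (h k).not_gt hk

theorem parts_cycleTypePartition (g : Perm (Fin n)) :
    (cycleTypePartition g).parts = g.partition.parts := by
  have (m : ℕ) (h : Fintype.card (Fin n) = m) :
      (h ▸ g.partition : m.Partition).parts = g.partition.parts := by
    subst h; rfl
  exact this n _

theorem exists_cycleTypePartition_eq (μ : Nat.Partition n) :
    ∃ g : Perm (Fin n), cycleTypePartition g = μ := by
  set long := μ.parts.filter (2 ≤ ·)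
  set short := μ.parts.filter (¬ 2 ≤ ·)
  have hshort : short = Multiset.replicate (Multiset.card short) 1 :=
    Multiset.eq_replicate_card.mpr fun b hb => by
      have := μ.parts_pos (Multiset.mem_of_mem_filter hb)
      have := (Multiset.mem_filter.mp hb).2
      omega
  have hsum : long.sum + Multiset.card short = n := by
    conv_rhs => rw [← μ.parts_sum, ← Multiset.filter_add_not (2 ≤ ·) μ.parts, Multiset.sum_add]
    have : short.sum = Multiset.card short := by rw [hshort]; simp
    rw [this]
  obtain ⟨g, hg⟩ := (Perm.exists_with_cycleType_iff (Fin n) (m := long)).mpr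
    ⟨by simp; omega, fun a ha => (Multiset.mem_filter.mp ha).2⟩
  refine ⟨g, Nat.Partition.ext ?_⟩
  rw [parts_cycleTypePartition, Perm.parts_partition, hg, ← Perm.sum_cycleType, hg,
    Fintype.card_fin, ← Multiset.filter_add_not (2 ≤ ·) μ.parts]
  change long + _ = long + short
  rw [hshort, ← hsum, Nat.add_sub_cancel_left]

theorem permChar_eq_mergeCount (lam : Nat.Partition n) (g : Perm (Fin n)) :
    permChar lam g = mergeCount (descList (cycleTypePartition g)).get (descList lam) := by
  rw [← mergeCount_eq_of_map_univ_eq (w := g.cycleCard)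
    (by rw [Perm.map_cycleCard_univ, map_get_descList, parts_cycleTypePartition]),
    permChar, ← Nat.card_eq_fintype_card]
  refine Nat.card_congr ((subtypeSubtypeEquivSubtypeInter _ _).symm.trans
    ((g.invariantFunEquiv _).subtypeEquiv fun f => forall_congr' fun j => ?_))
  rw [← Perm.card_filter_mk_eq]
  rfl

theorem plexLE_of_permChar_ne_zero {lam : Nat.Partition n} {g : Perm (Fin n)}
    (h : permChar lam g ≠ 0) : plexLE (cycleTypePartition g) lam :=
  plexLE_of_sum_take_le <| sum_take_le_of_mergeCount_ne_zero (pairwise_descList lam)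
    (permChar_eq_mergeCount lam g ▸ h)

theorem permChar_eq_bNum {μ : Nat.Partition n} {g : Perm (Fin n)}
    (hg : cycleTypePartition g = μ) : permChar μ g = bNum μ := by
  rw [permChar_eq_mergeCount, hg, mergeCount_get_self fun _ => pos_of_mem_descList,
    Nat.card_eq_fintype_card, DomMulAct.stabilizer_card', bNum]
  have himage : univ.image (descList μ).get = μ.parts.toFinset := by
    rw [← map_get_descList]; rfl
  refine himage ▸ prod_congr rfl fun i _ => ?_
  rw [Fintype.card_subtype_eq_count_map, map_get_descList]

theorem permChar_eq_sum_of_plexLE {X d : Nat.Partition n → Nat.Partition n → ℤ}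
    (hd_upper : ∀ lam mu, d lam mu ≠ 0 → plexLE lam mu)
    (hd_decomp : ∀ lam (g : Perm (Fin n)),
      (permChar lam g : ℤ) = ∑ mu, d lam mu * X mu (cycleTypePartition g))
    {α lam : Nat.Partition n} (hlam : plexLE α lam) (g : Perm (Fin n)) :
    (permChar lam g : ℤ) =
      ∑ nu : {ν // plexLE α ν}, d lam nu.1 * X nu.1 (cycleTypePartition g) := by
  have hsupp : ∀ nu ∈ univ, d lam nu * X nu (cycleTypePartition g) ≠ 0 → plexLE α nu :=
    fun nu _ h => plexLE_iff_le.mpr ((plexLE_iff_le.mp hlam).trans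
      (plexLE_iff_le.mp (hd_upper _ _ (left_ne_zero_of_mul h))))
  rw [hd_decomp, ← sum_filter_of_ne hsupp, ← sum_subtype_eq_sum_filter, subtype_univ]

/-- **Theorem 3.1 (determinant part).** For a partition `α` of `n`, the determinant of the
submatrix `X^(α) = (χ^λ_μ)_{λ,μ ≥ α}` of the character table of `S_n` (rows and columns indexed
by the partitions of `n` that are `≥ α` in lexicographic order) equals `∏_{μ ≥ α} b_μ`. -/
theorem det_large_submatrix (n : ℕ) (X : Nat.Partition n → Nat.Partition n → ℤ)
    (hX : IsCharTable X) (α : Nat.Partition n) :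
    (Matrix.of fun lam mu : {μ : Nat.Partition n // plexLE α μ} => X lam.1 mu.1).det =
      ∏ μ : {μ : Nat.Partition n // plexLE α μ}, (bNum μ.1 : ℤ) := by
  obtain ⟨-, ⟨d, hd_diag, hd_upper, hd_decomp⟩, -⟩ := hX
  choose g hg using exists_cycleTypePartition_eq (n := n)
  let _ : LinearOrder {μ // plexLE α μ} :=
    LinearOrder.lift' (fun μ => descList μ.1) (descList_injective.comp Subtype.val_injective)
  have hmul : (Matrix.of fun lam mu : {μ // plexLE α μ} => (permChar lam.1 (g mu.1) : ℤ)) =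
      (Matrix.of fun lam nu : {μ // plexLE α μ} => d lam.1 nu.1) *
        Matrix.of fun lam mu : {μ // plexLE α μ} => X lam.1 mu.1 := by
    ext lam mu
    rw [Matrix.of_apply, permChar_eq_sum_of_plexLE hd_upper hd_decomp lam.2, hg]
    rfl
  rw [Matrix.det_eq_prod_diag_of_eq_unitriangular_mul ?_ ?_ (fun lam => hd_diag lam.1) hmul]
  · exact prod_congr rfl fun μ _ => by simp [permChar_eq_bNum (hg μ.1)]
  · intro lam mu hlt
    by_contra h
    have hle := plexLE_iff_le.mp (hg mu.1 ▸ plexLE_of_permChar_ne_zero (by simpa using h))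
    exact not_lt_of_ge hle hlt
  · intro lam mu hlt
    by_contra h
    exact not_lt_of_ge (plexLE_iff_le.mp (hd_upper _ _ h)) hlt

end SnTable
end

section
/- For every n ∈ ℕ and every partition α of n, the rational number (∏_{μ<α} b_μ)/(∏_{μ<α} a_μ) is a (positive) integer, where the products run over partitions μ of n lexicographically smaller than α, a_μ = ∏_i i^{m_i(μ)} and b_μ = ∏_i m_i(μ)!. -/
open scoped Classical

namespace PartArith

/-- `a_μ = ∏ i^{m_i(μ)}`, the product of the parts of `μ`. -/
def aNum {n : ℕ} (μ : Nat.Partition n) : ℕ := μ.parts.prod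

/-- `b_μ = ∏ m_i(μ)!`, the product of the factorials of the multiplicities of the parts. -/
def bNum {n : ℕ} (μ : Nat.Partition n) : ℕ :=
  ∏ i ∈ μ.parts.toFinset, (μ.parts.count i).factorial

/-- `t_S(n)`, the number of divisors of `n` lying in `S`. -/
noncomputable def tS (S : Set ℕ) (n : ℕ) : ℕ := (n.divisors.filter (· ∈ S)).card

/-- `e_{S,p}(n) = ∑_{d ∣ n, d ∈ S} ν_p(d)`. -/
noncomputable def eS (S : Set ℕ) (p n : ℕ) : ℕ :=
  ∑ d ∈ n.divisors.filter (· ∈ S), d.factorization p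

/-- `f_{S,p}(n) = |{(r, j) : r ∈ S, j ≥ 1, r·p^j ∣ n}|` (for `n ≥ 1` this set is finite and
contained in `divisors n × [1, n]`). -/
noncomputable def fS (S : Set ℕ) (p n : ℕ) : ℕ :=
  ((n.divisors ×ˢ Finset.Icc 1 n).filter fun rj => rj.1 ∈ S ∧ rj.1 * p ^ rj.2 ∣ n).card

/-- `S` is `p`-divisible: `p·r ∈ S` (for `r ≥ 1`) implies `r ∈ S`. -/
def PDivisible (S : Set ℕ) (p : ℕ) : Prop := ∀ r : ℕ, 1 ≤ r → p * r ∈ S → r ∈ S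

/-- `S` is `p`-closed: `d ∈ S` implies `p·d ∈ S`. -/
def PClosed (S : Set ℕ) (p : ℕ) : Prop := ∀ d ∈ S, p * d ∈ S

/-- The number of partitions of `n` with all parts in `S`. -/
noncomputable def pCount (S : Set ℕ) (n : ℕ) : ℕ :=
  Fintype.card {μ : Nat.Partition n // ∀ i ∈ μ.parts, i ∈ S}

/-- `a_{P(n,S)} = ∏_{μ ∈ P(n,S)} a_μ`. -/
noncomputable def aProd (S : Set ℕ) (n : ℕ) : ℕ :=
  ∏ μ : {μ : Nat.Partition n // ∀ i ∈ μ.parts, i ∈ S}, aNum μ.1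

/-- `b_{P(n,S)} = ∏_{μ ∈ P(n,S)} b_μ`. -/
noncomputable def bProd (S : Set ℕ) (n : ℕ) : ℕ :=
  ∏ μ : {μ : Nat.Partition n // ∀ i ∈ μ.parts, i ∈ S}, bNum μ.1


/-- The parts of a partition, listed in weakly decreasing order. -/
def descList {n : ℕ} (μ : Nat.Partition n) : List ℕ := (μ.parts.sort (· ≤ ·)).reverse

/-- Strict lexicographic order on partitions of `n`. -/
def plex {n : ℕ} (μ ν : Nat.Partition n) : Prop :=
  List.Lex (· < ·) (descList μ) (descList ν)


/-!
Fix a prime `p` and `q = p ^ j` with `j ≥ 1`. Replacing `t` parts equal to `q * i` by `t * q` parts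
equal to `i` is injective and makes a partition lexicographically smaller, so among the partitions
below `α`, those with at least `t` parts `q * i` inject into those with at least `t * q` parts `i`.
Summing over `t` gives `∑_μ m_{qi}(μ) ≤ ∑_μ ⌊m_i(μ) / q⌋`. Summing this over `i` and `j`, the left
side becomes `ν_p(∏ a_μ)` and, by Legendre's formula `ν_p(m!) = ∑_j ⌊m / p^j⌋`, the right side
becomes `ν_p(∏ b_μ)`.
-/

open Finset

theorem _root_.Nat.div_eq_card_filter {m q N : ℕ} (hq : 0 < q) (hm : m ≤ N) :
    m / q = #{t ∈ Icc 1 N | t * q ≤ m} := by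
  have : {t ∈ Icc 1 N | t * q ≤ m} = Icc 1 (m / q) := by
    ext t
    simp only [mem_filter, mem_Icc, Nat.le_div_iff_mul_le hq]
    constructor
    · grind
    · intro h
      exact ⟨⟨h.1, by nlinarith⟩, h.2⟩
  simp [this]

theorem _root_.Finset.sum_div_eq_sum_card_filter {ι : Type*} {s : Finset ι} {f : ι → ℕ}
    {q N : ℕ} (hq : 0 < q) (hf : ∀ x ∈ s, f x ≤ N) :
    ∑ x ∈ s, f x / q = ∑ t ∈ Icc 1 N, #{x ∈ s | t * q ≤ f x} := by
  rw [sum_congr rfl fun x hx => Nat.div_eq_card_filter hq (hf x hx)]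
  exact sum_card_bipartiteAbove_eq_sum_card_bipartiteBelow _

theorem _root_.Finset.sum_filter_dvd_le_sum_mul (f : ℕ → ℕ) {q : ℕ} (hq : 0 < q) (N : ℕ) :
    ∑ x ∈ Icc 1 N with q ∣ x, f x ≤ ∑ i ∈ Icc 1 N, f (q * i) := by
  rw [← sum_image (g := (q * ·)) fun _ _ _ _ h => Nat.eq_of_mul_eq_mul_left hq h]
  refine sum_le_sum_of_subset fun x hx => ?_
  obtain ⟨hx, i, rfl⟩ := mem_filter.1 hx
  simp only [mem_Icc] at hx
  exact mem_image.2 ⟨i, mem_Icc.2 ⟨by grind, by nlinarith⟩, rfl⟩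

theorem _root_.Nat.Partition.count_parts_le {n : ℕ} (μ : Nat.Partition n) (c : ℕ) :
    μ.parts.count c ≤ n := by
  have h := Multiset.card_nsmul_le_sum (s := μ.parts) (a := 1) fun x hx => μ.parts_pos hx
  rw [smul_eq_mul, mul_one, μ.parts_sum] at h
  exact (Multiset.count_le_card c _).trans h

theorem _root_.Nat.factorization_eq_card_pow_dvd_Icc {p m N : ℕ} (hp : p.Prime) (hm : 0 < m)
    (hmN : m ≤ N) :
    m.factorization p = #{j ∈ Icc 1 N | p ^ j ∣ m} := by
  rw [Nat.factorization_eq_card_pow_dvd m hp, Nat.Ico_filter_pow_dvd_eq hp hm.ne'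
    (hmN.trans (Nat.lt_pow_self hp.one_lt).le)]

theorem _root_.Nat.Partition.parts_toFinset_subset_Icc {n : ℕ} (μ : Nat.Partition n) :
    μ.parts.toFinset ⊆ Icc 1 n := fun i hi => by
  rw [Multiset.mem_toFinset] at hi
  exact mem_Icc.2 ⟨μ.parts_pos hi, Nat.Partition.le_of_mem_parts hi⟩

theorem _root_.List.lt_of_count_lt_of_count_eq {α : Type*} [LinearOrder α] :
    ∀ (l₁ : List α) {l₂ : List α}, l₁.Pairwise (· ≥ ·) → l₂.Pairwise (· ≥ ·) → ∀ b : α,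
    l₂.count b < l₁.count b → (∀ c, b < c → l₁.count c = l₂.count c) → l₂ < l₁
  | [], _, _, _, _, hlt, _ => by simp at hlt
  | _ :: _, [], _, _, _, _, _ => List.nil_lt_cons _ _
  | a :: l₁, a' :: l₂, h₁, h₂, b, hlt, heq => by
    rw [List.pairwise_cons] at h₁ h₂
    have hba : b ≤ a := by
      obtain rfl | hb := List.mem_cons.1 (List.count_pos_iff.1 (by omega : 0 < (a :: l₁).count b))
      exacts [le_rfl, h₁.1 b hb]
    have ha'a : a' ≤ a := by
      by_contra! ha
      have ha' : a' ∈ a :: l₁ := by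
        rw [← List.count_pos_iff, heq a' (hba.trans_lt ha), List.count_pos_iff]
        exact List.mem_cons_self
      obtain rfl | ha' := List.mem_cons.1 ha'
      exacts [lt_irrefl _ ha, (h₁.1 a' ha').not_gt ha]
    obtain ha'a | rfl := ha'a.lt_or_eq
    · exact List.Lex.rel ha'a
    · refine List.Lex.cons (lt_of_count_lt_of_count_eq l₁ h₁.2 h₂.2 b ?_ fun c hc => ?_)
      · simp only [List.count_cons] at hlt
        omega
      · have := heq c hc
        simp only [List.count_cons] at this
        omega

theorem pairwise_descList {n : ℕ} (μ : Nat.Partition n) : (descList μ).Pairwise (· ≥ ·) :=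
  List.pairwise_reverse.2 (μ.parts.pairwise_sort _)

theorem count_descList {n : ℕ} (μ : Nat.Partition n) (b : ℕ) :
    (descList μ).count b = μ.parts.count b := by
  rw [descList, List.count_reverse, ← Multiset.coe_count, Multiset.sort_eq]

theorem plex_of_count_lt_of_count_eq {n : ℕ} {μ ν : Nat.Partition n} (b : ℕ)
    (hlt : ν.parts.count b < μ.parts.count b)
    (heq : ∀ c, b < c → μ.parts.count c = ν.parts.count c) : plex ν μ :=
  List.lt_of_count_lt_of_count_eq _ (pairwise_descList μ) (pairwise_descList ν) b
    (by simpa only [count_descList] using hlt) (by simpa only [count_descList] using heq)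

theorem plex_trans {n : ℕ} {μ ν ρ : Nat.Partition n} (h₁ : plex μ ν) (h₂ : plex ν ρ) : plex μ ρ :=
  List.lt_trans h₁ h₂

/-- `t` is capped at the multiplicity of `q * i` to make the operation total. -/
def split (q i t : ℕ) {n : ℕ} (μ : Nat.Partition n) : Nat.Partition n where
  parts := μ.parts - .replicate (min t (μ.parts.count (q * i))) (q * i) +
    .replicate (min t (μ.parts.count (q * i)) * q) i
  parts_pos {x} hx := by
    rcases Multiset.mem_add.1 hx with hx | hx
    · exact μ.parts_pos (Multiset.mem_of_le tsub_le_self hx)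
    · obtain ⟨hk, rfl⟩ := Multiset.mem_replicate.1 hx
      have hqx : q * x ∈ μ.parts := Multiset.count_pos.1 (by grind)
      exact Nat.pos_of_mul_pos_left (μ.parts_pos hqx)
  parts_sum := by
    have hle := Multiset.le_count_iff_replicate_le.1 (min_le_right t (μ.parts.count (q * i)))
    have hsum := congrArg Multiset.sum (tsub_add_cancel_of_le hle)
    simp only [Multiset.sum_add, Multiset.sum_replicate, smul_eq_mul, μ.parts_sum] at hsum ⊢
    rwa [mul_assoc]

section split

variable {q i t n : ℕ} {μ : Nat.Partition n}

theorem split_parts (ht : t ≤ μ.parts.count (q * i)) :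
    (split q i t μ).parts = μ.parts - .replicate t (q * i) + .replicate (t * q) i := by
  simp only [split, min_eq_left ht]

theorem count_split_of_ne (ht : t ≤ μ.parts.count (q * i)) {c : ℕ} (hc : c ≠ q * i)
    (hc' : c ≠ i) :
    (split q i t μ).parts.count c = μ.parts.count c := by
  simp [split_parts ht, Multiset.count_replicate, hc.symm, hc'.symm]

theorem count_split_mul (ht : t ≤ μ.parts.count (q * i)) (hne : q * i ≠ i) :
    (split q i t μ).parts.count (q * i) = μ.parts.count (q * i) - t := by
  simp [split_parts ht, Multiset.count_replicate, hne.symm]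

theorem count_split_self (ht : t ≤ μ.parts.count (q * i)) (hne : q * i ≠ i) :
    (split q i t μ).parts.count i = μ.parts.count i + t * q := by
  simp [split_parts ht, Multiset.count_replicate, hne]

theorem plex_split (hq : 2 ≤ q) (hi : 0 < i) (ht₀ : 0 < t) (ht : t ≤ μ.parts.count (q * i)) :
    plex (split q i t μ) μ := by
  have hlt : i < q * i := by nlinarith
  refine plex_of_count_lt_of_count_eq (q * i) ?_ fun c hc => ?_
  · rw [count_split_mul ht hlt.ne']
    omega
  · rw [count_split_of_ne ht hc.ne' (by omega)]

theorem split_injOn {μ₁ μ₂ : Nat.Partition n} (h₁ : t ≤ μ₁.parts.count (q * i))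
    (h₂ : t ≤ μ₂.parts.count (q * i)) (h : split q i t μ₁ = split q i t μ₂) : μ₁ = μ₂ := by
  have h := congrArg Nat.Partition.parts h
  rw [split_parts h₁, split_parts h₂, add_left_inj] at h
  ext1
  rw [← tsub_add_cancel_of_le (Multiset.le_count_iff_replicate_le.1 h₁), h,
    tsub_add_cancel_of_le (Multiset.le_count_iff_replicate_le.1 h₂)]

end split

def IsPlexLowerSet {n : ℕ} (s : Finset (Nat.Partition n)) : Prop := ∀ μ ∈ s, ∀ ν, plex ν μ → ν ∈ s

section lowerSet

variable {n q i : ℕ} {s : Finset (Nat.Partition n)}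

theorem card_count_mul_le_card_count (hs : IsPlexLowerSet s) (hq : 2 ≤ q) (hi : 0 < i) {t : ℕ}
    (ht : 0 < t) :
    #{μ ∈ s | t ≤ μ.parts.count (q * i)} ≤ #{μ ∈ s | t * q ≤ μ.parts.count i} := by
  have hne : q * i ≠ i := by nlinarith
  refine card_le_card_of_injOn (split q i t) (fun μ hμ => ?_) fun μ₁ h₁ μ₂ h₂ => ?_
  · obtain ⟨hμ, hcount⟩ := mem_filter.1 hμ
    refine mem_filter.2 ⟨hs μ hμ _ (plex_split hq hi ht hcount), ?_⟩
    rw [count_split_self hcount hne]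
    omega
  · exact split_injOn (mem_filter.1 h₁).2 (mem_filter.1 h₂).2

theorem sum_count_mul_le_sum_count_div (hs : IsPlexLowerSet s) (hq : 2 ≤ q) (hi : 0 < i) :
    ∑ μ ∈ s, μ.parts.count (q * i) ≤ ∑ μ ∈ s, μ.parts.count i / q :=
  calc ∑ μ ∈ s, μ.parts.count (q * i)
      = ∑ t ∈ Icc 1 n, #{μ ∈ s | t * 1 ≤ μ.parts.count (q * i)} := by
        simpa using sum_div_eq_sum_card_filter one_pos fun μ _ => μ.count_parts_le (q * i)
    _ ≤ ∑ t ∈ Icc 1 n, #{μ ∈ s | t * q ≤ μ.parts.count i} := by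
        refine sum_le_sum fun t ht => ?_
        simpa using card_count_mul_le_card_count hs hq hi (mem_Icc.1 ht).1
    _ = ∑ μ ∈ s, μ.parts.count i / q :=
        (sum_div_eq_sum_card_filter (by omega) fun μ _ => μ.count_parts_le i).symm

end lowerSet

section factorization

variable {n : ℕ} (μ : Nat.Partition n)

theorem factorization_aNum (p : ℕ) :
    (aNum μ).factorization p = ∑ i ∈ Icc 1 n, μ.parts.count i * i.factorization p := by
  rw [aNum, prod_multiset_count_of_subset _ _ μ.parts_toFinset_subset_Icc,
    Nat.factorization_prod_apply fun i hi => pow_ne_zero _ (by grind)]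
  simp [Nat.factorization_pow]

theorem factorization_bNum {p : ℕ} (hp : p.Prime) :
    (bNum μ).factorization p = ∑ i ∈ Icc 1 n, ∑ j ∈ Icc 1 n, μ.parts.count i / p ^ j := by
  rw [bNum, prod_subset μ.parts_toFinset_subset_Icc fun i _ hi => by
    rw [Multiset.count_eq_zero.2 (by simpa using hi), Nat.factorial_zero],
    Nat.factorization_prod_apply fun i _ => Nat.factorial_ne_zero _]
  refine sum_congr rfl fun i _ => ?_
  rw [Nat.factorization_factorial hp (b := n + 1), Finset.Ico_add_one_right_eq_Icc]
  exact Nat.lt_add_one_of_le ((Nat.log_le_self p _).trans (μ.count_parts_le i))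

end factorization

theorem sum_factorization_aNum_le {n p : ℕ} {s : Finset (Nat.Partition n)}
    (hs : IsPlexLowerSet s) (hp : p.Prime) :
    ∑ μ ∈ s, (aNum μ).factorization p ≤ ∑ μ ∈ s, (bNum μ).factorization p :=
  calc ∑ μ ∈ s, (aNum μ).factorization p
      = ∑ i ∈ Icc 1 n, ∑ j ∈ Icc 1 n with p ^ j ∣ i, ∑ μ ∈ s, μ.parts.count i := by
        simp_rw [factorization_aNum, sum_const, smul_eq_mul]
        rw [sum_comm]
        refine sum_congr rfl fun i hi => ?_
        obtain ⟨hi₀, hin⟩ := mem_Icc.1 hi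
        rw [← sum_mul, mul_comm, Nat.factorization_eq_card_pow_dvd_Icc hp hi₀ hin]
    _ = ∑ j ∈ Icc 1 n, ∑ i ∈ Icc 1 n with p ^ j ∣ i, ∑ μ ∈ s, μ.parts.count i := by
        refine sum_comm' fun _ _ => ?_
        simp only [mem_filter]
        tauto
    _ ≤ ∑ j ∈ Icc 1 n, ∑ i ∈ Icc 1 n, ∑ μ ∈ s, μ.parts.count i / p ^ j := by
        refine sum_le_sum fun j hj => ?_
        have hq : 2 ≤ p ^ j := hp.two_le.trans (Nat.le_self_pow (by grind) p)
        calc _ ≤ ∑ i ∈ Icc 1 n, ∑ μ ∈ s, μ.parts.count (p ^ j * i) :=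
              sum_filter_dvd_le_sum_mul _ (by omega) n
          _ ≤ _ := sum_le_sum fun i hi =>
              sum_count_mul_le_sum_count_div hs hq (mem_Icc.1 hi).1
    _ = ∑ μ ∈ s, (bNum μ).factorization p := by
        simp_rw [factorization_bNum _ hp]
        rw [sum_comm]
        exact (sum_congr rfl fun _ _ => sum_comm).trans sum_comm

theorem prod_aNum_dvd_prod_bNum {n : ℕ} {s : Finset (Nat.Partition n)}
    (hs : IsPlexLowerSet s) : ∏ μ ∈ s, aNum μ ∣ ∏ μ ∈ s, bNum μ := by
  have ha : ∀ μ ∈ s, aNum μ ≠ 0 := fun μ _ => Multiset.prod_ne_zero fun h => (μ.parts_pos h).ne rfl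
  have hb : ∀ μ ∈ s, bNum μ ≠ 0 := fun μ _ => prod_ne_zero_iff.2 fun _ _ => Nat.factorial_ne_zero _
  rw [← Nat.factorization_prime_le_iff_dvd (prod_ne_zero_iff.2 ha) (prod_ne_zero_iff.2 hb)]
  intro p hp
  rw [Nat.factorization_prod_apply ha, Nat.factorization_prod_apply hb]
  exact sum_factorization_aNum_le hs hp

/-- **Corollary 3.8.** For every `n ∈ ℕ` and every partition `α` of `n`, the quotient
`(∏_{μ < α} b_μ)/(∏_{μ < α} a_μ)` is a (positive) integer; that is, `∏_{μ < α} a_μ` divides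
`∏_{μ < α} b_μ`, the products running over the partitions `μ` of `n` that are lexicographically
smaller than `α`. -/
theorem aProd_dvd_bProd_lex (n : ℕ) (α : Nat.Partition n) :
    (∏ μ : {μ : Nat.Partition n // plex μ α}, aNum μ.1) ∣
      ∏ μ : {μ : Nat.Partition n // plex μ α}, bNum μ.1 := by
  have hmem : ∀ μ, μ ∈ ({μ | plex μ α} : Finset (Nat.Partition n)) ↔ plex μ α := by simp
  rw [← prod_subtype _ hmem aNum, ← prod_subtype _ hmem bNum]
  refine prod_aNum_dvd_prod_bNum fun μ hμ ν hνμ => ?_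
  exact (hmem ν).2 (plex_trans hνμ ((hmem μ).1 hμ))

end PartArith
end

section
/- Let p be a prime and S ⊆ ℕ be p-divisible (pr ∈ S implies r ∈ S). For n ∈ ℕ let t_S(n) be the number of divisors of n in S, e_{S,p}(n) = Σ_{d|n, d∈S} ν_p(d), and f_{S,p}(n) = |{(r,j) : r ∈ S, j ≥ 1, rp^j | n}|. Then f_{S,p}(n) = ν_p(n)·t_S(n) − e_{S,p}(n), and in particular f_{S,p}(n) ≥ e_{S,p}(n). -/
/-! For a divisor `r ∈ S` of `n`, the exponents `j ≥ 1` with `r * p ^ j ∣ n` are exactly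
`1, …, ν_p(n / r) = ν_p(n) - ν_p(r)`; summing over `r` gives the identity. Likewise
`e_{S,p}(n)` counts the pairs `(d, j)` with `d ∈ S`, `d ∣ n`, `j ≥ 1` and `p ^ j ∣ d`, and
`(d, j) ↦ (d / p ^ j, j)` injects these into the pairs counted by `f_{S,p}(n)`, since
`p`-divisibility keeps `d / p ^ j` in `S`. -/

open scoped Classical

namespace PartArith

open Finset

theorem _root_.Finset.card_filter_product_eq_sum {α β : Type*} (s : Finset α) (t : Finset β)
    (P : α → β → Prop) [∀ a b, Decidable (P a b)] :
    #{x ∈ s ×ˢ t | P x.1 x.2} = ∑ a ∈ s, #{b ∈ t | P a b} := by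
  simp only [card_filter, sum_product]

theorem _root_.Nat.factorization_eq_card_filter_Icc_pow_dvd {p m N : ℕ} (hp : p.Prime)
    (hm : m ≠ 0) (hmN : m ≤ N) : m.factorization p = #{j ∈ Icc 1 N | p ^ j ∣ m} := by
  rw [Nat.factorization_eq_card_pow_dvd m hp,
    Nat.Ico_filter_pow_dvd_eq hp hm (hmN.trans (Nat.lt_pow_self hp.one_lt).le)]

theorem PDivisible.mem_of_pow_mul_mem {S : Set ℕ} {p : ℕ} (hdiv : PDivisible S p) (hp : p ≠ 0)
    {r : ℕ} (hr : 0 < r) (j : ℕ) (h : p ^ j * r ∈ S) : r ∈ S := by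
  induction j generalizing r with
  | zero => simpa using h
  | succ j ih =>
    refine hdiv r hr (ih (Nat.mul_pos (Nat.pos_of_ne_zero hp) hr) ?_)
    rwa [← mul_assoc, ← pow_succ]

variable {S : Set ℕ} {p n : ℕ}

theorem fS_eq_card :
    fS S p n = #{x ∈ {d ∈ n.divisors | d ∈ S} ×ˢ Icc 1 n | x.1 * p ^ x.2 ∣ n} := by
  rw [fS, ← filter_product_left, filter_filter]

theorem fS_eq_sum_factorization_div (hp : p.Prime) :
    fS S p n = ∑ r ∈ {d ∈ n.divisors | d ∈ S}, (n / r).factorization p := by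
  rw [fS_eq_card, card_filter_product_eq_sum _ _ fun r j => r * p ^ j ∣ n]
  refine sum_congr rfl fun r hr => ?_
  obtain ⟨hrn, hn⟩ := Nat.mem_divisors.mp (mem_filter.mp hr).1
  simp only [← Nat.dvd_div_iff_mul_dvd hrn]
  have hnr : n / r ≠ 0 :=
    (Nat.div_ne_zero_iff_of_dvd hrn).mpr ⟨hn, ne_zero_of_dvd_ne_zero hn hrn⟩
  exact (Nat.factorization_eq_card_filter_Icc_pow_dvd hp hnr (Nat.div_le_self n r)).symm

theorem eS_eq_card (hp : p.Prime) :
    eS S p n = #{x ∈ {d ∈ n.divisors | d ∈ S} ×ˢ Icc 1 n | p ^ x.2 ∣ x.1} := by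
  rw [eS, card_filter_product_eq_sum _ _ fun d j => p ^ j ∣ d]
  refine sum_congr rfl fun d hd => ?_
  obtain ⟨hdn, hn⟩ := Nat.mem_divisors.mp (mem_filter.mp hd).1
  exact Nat.factorization_eq_card_filter_Icc_pow_dvd hp (ne_zero_of_dvd_ne_zero hn hdn)
    (Nat.divisor_le (Nat.mem_divisors.mpr ⟨hdn, hn⟩))

theorem fS_eq_factorization_mul_tS_sub_eS (hp : p.Prime) :
    (fS S p n : ℤ) = n.factorization p * tS S n - eS S p n := by
  have hsub : ∀ r ∈ {d ∈ n.divisors | d ∈ S},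
      (((n / r).factorization p : ℕ) : ℤ) = n.factorization p - r.factorization p := by
    intro r hr
    obtain ⟨hrn, hn⟩ := Nat.mem_divisors.mp (mem_filter.mp hr).1
    rw [Nat.factorization_div hrn, Finsupp.tsub_apply, Nat.cast_sub]
    exact (Nat.factorization_le_iff_dvd (ne_zero_of_dvd_ne_zero hn hrn) hn).mpr hrn p
  rw [fS_eq_sum_factorization_div hp, Nat.cast_sum, sum_congr rfl hsub, sum_sub_distrib,
    sum_const, nsmul_eq_mul, mul_comm, tS, eS, Nat.cast_sum]

theorem eS_le_fS (hp : p.Prime) (hdiv : PDivisible S p) : eS S p n ≤ fS S p n := by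
  rw [eS_eq_card hp, fS_eq_card]
  refine card_le_card_of_injOn (fun x => (x.1 / p ^ x.2, x.2)) ?_ ?_
  · rintro ⟨d, j⟩ hdj
    simp only [coe_filter, mem_product, mem_filter, Nat.mem_divisors, Set.mem_ofPred_eq] at hdj ⊢
    obtain ⟨⟨⟨⟨hdn, hn⟩, hdS⟩, hj⟩, hpd⟩ := hdj
    have hd : d ≠ 0 := ne_zero_of_dvd_ne_zero hn hdn
    refine ⟨⟨⟨⟨(Nat.div_dvd_of_dvd hpd).trans hdn, hn⟩, ?_⟩, hj⟩, ?_⟩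
    · refine hdiv.mem_of_pow_mul_mem hp.ne_zero (Nat.div_pos (Nat.le_of_dvd
        (Nat.pos_of_ne_zero hd) hpd) (pow_pos hp.pos j)) j ?_
      rwa [Nat.mul_div_cancel' hpd]
    · rwa [Nat.div_mul_cancel hpd]
  · rintro ⟨d, j⟩ hdj ⟨d', j'⟩ hdj' h
    simp only [coe_filter, mem_product, Set.mem_ofPred_eq, Prod.mk.injEq] at hdj hdj' h
    obtain ⟨hquot, rfl⟩ := h
    rw [← Nat.div_mul_cancel hdj.2, ← Nat.div_mul_cancel hdj'.2, hquot]

theorem fS_eq_and_ge_general (S : Set ℕ) (p : ℕ) (hp : p.Prime) (hdiv : PDivisible S p)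
    (n : ℕ) :
    (fS S p n : ℤ) = n.factorization p * tS S n - eS S p n ∧ eS S p n ≤ fS S p n :=
  ⟨fS_eq_factorization_mul_tS_sub_eS hp, eS_le_fS hp hdiv⟩

/-- **Proposition 4.2 (first part).** Let `p` be a prime and `S ⊆ ℕ` be `p`-divisible.  Then for
all `n ≥ 1`, `f_{S,p}(n) = ν_p(n)·t_S(n) − e_{S,p}(n)`, and in particular
`f_{S,p}(n) ≥ e_{S,p}(n)`. -/
theorem fS_eq_and_ge (S : Set ℕ) (p : ℕ) (hp : p.Prime) (hdiv : PDivisible S p)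
    (n : ℕ) (hn : 0 < n) :
    (fS S p n : ℤ) = n.factorization p * tS S n - eS S p n ∧ eS S p n ≤ fS S p n :=
  fS_eq_and_ge_general S p hp hdiv n

end PartArith
end

section
/- Let p be a prime and S ⊆ ℕ be both p-divisible and p-closed (d ∈ S implies pd ∈ S). Then for all n ∈ ℕ, e_{S,p}(n) = f_{S,p}(n) = C(ν_p(n)+1, 2) · t_S(w(n)), where w(n) = n/p^{ν_p(n)} is the p′-part of n and t_S counts divisors in S. -/
open scoped Classical

namespace PartArith

/-! Every divisor of `n = p ^ v * w` (with `p ∤ w`) is uniquely `p ^ i * m` with `i ≤ v` and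
`m ∣ w`, and since `S` is `p`-divisible and `p`-closed, `p ^ i * m ∈ S ↔ m ∈ S`. So summing any
function `g` of `ν_p(d)` over the divisors `d ∈ S` of `n` gives `t_S(w) · ∑_{i ≤ v} g i`. For
`e_{S,p}` take `g i = i`; for `f_{S,p}` the pairs `(r, j)` with a given `r` are the
`1 ≤ j ≤ v - ν_p(r)`, so `g i = v - i`. Both sums over `i ≤ v` equal `C(v + 1, 2)`. -/

lemma pow_mul_mem_iff {S : Set ℕ} {p : ℕ} (hp : p ≠ 0) (hdiv : PDivisible S p)
    (hcl : PClosed S p) (i : ℕ) {m : ℕ} (hm : m ≠ 0) : p ^ i * m ∈ S ↔ m ∈ S := by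
  induction i with
  | zero => simp
  | succ i ih =>
    rw [pow_succ', mul_assoc, ← ih]
    exact ⟨hdiv _ (Nat.one_le_iff_ne_zero.2 (mul_ne_zero (pow_ne_zero i hp) hm)), hcl _⟩

lemma mem_iff_ordCompl_mem {S : Set ℕ} {p : ℕ} (hp : p ≠ 0) (hdiv : PDivisible S p)
    (hcl : PClosed S p) {d : ℕ} (hd : d ≠ 0) : d ∈ S ↔ ordCompl[p] d ∈ S := by
  conv_lhs => rw [← Nat.ordProj_mul_ordCompl_eq_self d p]
  exact pow_mul_mem_iff hp hdiv hcl _ (Nat.ordCompl_pos p hd).ne'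

lemma factorization_pow_mul_of_not_dvd {p : ℕ} (hp : p.Prime) (i : ℕ) {m : ℕ} (hm : ¬p ∣ m) :
    (p ^ i * m).factorization p = i := by
  have hm0 : m ≠ 0 := by rintro rfl; exact hm (dvd_zero p)
  simp [Nat.factorization_mul (pow_ne_zero i hp.ne_zero) hm0, hp.factorization_pow,
    Nat.factorization_eq_zero_of_not_dvd hm]

lemma dvd_iff_factorization_le_and_ordCompl_dvd {d n : ℕ} (hn : n ≠ 0) (p : ℕ) :
    d ∣ n ↔ d.factorization p ≤ n.factorization p ∧ ordCompl[p] d ∣ ordCompl[p] n := by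
  refine ⟨fun h => ⟨?_, Nat.ordCompl_dvd_ordCompl_of_dvd h p⟩, fun ⟨hle, hdvd⟩ => ?_⟩
  · exact (Nat.factorization_le_iff_dvd (ne_zero_of_dvd_ne_zero hn h) hn).2 h p
  · rw [← Nat.ordProj_mul_ordCompl_eq_self d p, ← Nat.ordProj_mul_ordCompl_eq_self n p]
    exact mul_dvd_mul (pow_dvd_pow p hle) hdvd

lemma mul_pow_dvd_iff {p r n : ℕ} (hp : p.Prime) (hrn : r ∣ n) (hn : n ≠ 0) (j : ℕ) :
    r * p ^ j ∣ n ↔ r.factorization p + j ≤ n.factorization p := by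
  have hr : r ≠ 0 := ne_zero_of_dvd_ne_zero hn hrn
  rw [dvd_iff_factorization_le_and_ordCompl_dvd hn p, Nat.ordCompl_mul, Nat.ordCompl_self_pow hp,
    mul_one, Nat.factorization_mul hr (pow_ne_zero j hp.ne_zero)]
  simp [hp.factorization_pow, Nat.ordCompl_dvd_ordCompl_of_dvd hrn p]

lemma sum_divisors_filter_factorization {M : Type*} [AddCommMonoid M] {S : Set ℕ} {p : ℕ}
    (hp : p.Prime) (hdiv : PDivisible S p) (hcl : PClosed S p) (n : ℕ) (g : ℕ → M) :
    ∑ d ∈ n.divisors.filter (· ∈ S), g (d.factorization p) =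
      tS S (ordCompl[p] n) • ∑ i ∈ Finset.range (n.factorization p + 1), g i := by
  rcases eq_or_ne n 0 with rfl | hn
  · simp [tS]
  have hdecomp : ∀ {i m : ℕ}, m ∈ (ordCompl[p] n).divisors →
      (p ^ i * m).factorization p = i ∧ ordCompl[p] (p ^ i * m) = m ∧ m ≠ 0 := by
    intro i m hm
    have hpm : ¬p ∣ m := fun h => Nat.not_dvd_ordCompl hp hn (h.trans (Nat.dvd_of_mem_divisors hm))
    exact ⟨factorization_pow_mul_of_not_dvd hp i hpm, Nat.ordCompl_pow_mul_of_not_dvd i hp hpm,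
      (Nat.pos_of_mem_divisors hm).ne'⟩
  rw [tS, ← Finset.sum_const, ← Finset.sum_product_right']
  refine Finset.sum_nbij' (fun d => (d.factorization p, ordCompl[p] d)) (fun x => p ^ x.1 * x.2)
    ?_ ?_ (fun d _ => Nat.ordProj_mul_ordCompl_eq_self d p) ?_ (fun _ _ => rfl)
  · intro d hd
    simp only [Finset.mem_filter, Nat.mem_divisors, Finset.mem_product, Finset.mem_range] at hd ⊢
    obtain ⟨⟨hdn, -⟩, hdS⟩ := hd
    obtain ⟨hle, hcompl⟩ := (dvd_iff_factorization_le_and_ordCompl_dvd hn p).1 hdn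
    exact ⟨Nat.lt_succ_of_le hle, ⟨hcompl, (Nat.ordCompl_pos p hn).ne'⟩,
      (mem_iff_ordCompl_mem hp.ne_zero hdiv hcl (ne_zero_of_dvd_ne_zero hn hdn)).1 hdS⟩
  · rintro ⟨i, m⟩ hx
    simp only [Finset.mem_filter, Nat.mem_divisors, Finset.mem_product, Finset.mem_range] at hx ⊢
    obtain ⟨hi, hm, hmS⟩ := hx
    obtain ⟨hfac, hcompl, hm0⟩ := hdecomp (i := i) (Nat.mem_divisors.2 hm)
    refine ⟨⟨(dvd_iff_factorization_le_and_ordCompl_dvd hn p).2 ?_, hn⟩,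
      (pow_mul_mem_iff hp.ne_zero hdiv hcl i hm0).2 hmS⟩
    rw [hcompl, hfac]
    exact ⟨Nat.le_of_lt_succ hi, hm.1⟩
  · intro x hx
    rw [Finset.mem_product, Finset.mem_filter] at hx
    obtain ⟨hfac, hcompl, -⟩ := hdecomp (i := x.1) hx.2.1
    exact Prod.ext hfac hcompl

lemma fS_eq_sum_card (S : Set ℕ) (p n : ℕ) :
    fS S p n = ∑ r ∈ n.divisors.filter (· ∈ S), ((Finset.Icc 1 n).filter (r * p ^ · ∣ n)).card := by
  rw [fS, Finset.card_filter, Finset.sum_product, Finset.sum_filter]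
  refine Finset.sum_congr rfl fun r _ => ?_
  by_cases hrS : r ∈ S <;> simp [hrS]

lemma card_filter_mul_pow_dvd {p r n : ℕ} (hp : p.Prime) (hr : r ∈ n.divisors) :
    ((Finset.Icc 1 n).filter (r * p ^ · ∣ n)).card = n.factorization p - r.factorization p := by
  obtain ⟨hrn, hn⟩ := Nat.mem_divisors.1 hr
  have hv : n.factorization p < n := Nat.factorization_lt p hn
  have hfilter : (Finset.Icc 1 n).filter (r * p ^ · ∣ n) =
      Finset.Icc 1 (n.factorization p - r.factorization p) := by
    ext j
    simp only [Finset.mem_filter, Finset.mem_Icc, mul_pow_dvd_iff hp hrn hn]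
    omega
  rw [hfilter, Nat.card_Icc, Nat.add_sub_cancel]

theorem eS_eq_fS_eq_general (S : Set ℕ) (p : ℕ) (hp : p.Prime) (hdiv : PDivisible S p)
    (hcl : PClosed S p) (n : ℕ) :
    eS S p n = fS S p n ∧
    eS S p n = Nat.choose (n.factorization p + 1) 2 * tS S (n / p ^ n.factorization p) := by
  set v := n.factorization p
  have he : eS S p n = tS S (ordCompl[p] n) * ∑ i ∈ Finset.range (v + 1), i :=
    sum_divisors_filter_factorization hp hdiv hcl n id
  have hf : fS S p n = tS S (ordCompl[p] n) * ∑ i ∈ Finset.range (v + 1), (v - i) := by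
    rw [fS_eq_sum_card, Finset.sum_congr rfl fun r hr =>
      card_filter_mul_pow_dvd hp (Finset.mem_filter.1 hr).1]
    exact sum_divisors_filter_factorization hp hdiv hcl n (v - ·)
  have hreflect : ∑ i ∈ Finset.range (v + 1), (v - i) = ∑ i ∈ Finset.range (v + 1), i :=
    Finset.sum_range_reflect id (v + 1)
  have hgauss : ∑ i ∈ Finset.range (v + 1), i = (v + 1).choose 2 := by
    rw [Finset.sum_range_id, Nat.choose_two_right]
  rw [he, hf, hreflect, hgauss]
  exact ⟨rfl, mul_comm _ _⟩

/-- **Proposition 4.2 (second part).** Let `p` be a prime and `S ⊆ ℕ` be both `p`-divisible and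
`p`-closed.  Then for all `n ≥ 1`,
`e_{S,p}(n) = f_{S,p}(n) = C(ν_p(n)+1, 2) · t_S(w(n))`, where `w(n) = n / p^{ν_p(n)}` is the
`p′`-part of `n`. -/
theorem eS_eq_fS_eq (S : Set ℕ) (p : ℕ) (hp : p.Prime) (hdiv : PDivisible S p)
    (hcl : PClosed S p) (n : ℕ) (hn : 0 < n) :
    eS S p n = fS S p n ∧
    eS S p n = Nat.choose (n.factorization p + 1) 2 * tS S (n / p ^ n.factorization p) :=
  eS_eq_fS_eq_general S p hp hdiv hcl n

end PartArith
end

section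
/- Let p be a prime and S ⊆ ℕ be p-divisible. Then for all n ∈ ℕ, ν_p(∏_{λ∈P(n,S)} a_λ) ≤ ν_p(∏_{λ∈P(n,S)} b_λ), and equality holds if S is additionally p-closed. In particular, if S is p-divisible for all primes p, then ∏_{λ∈P(n,S)} a_λ divides ∏_{λ∈P(n,S)} b_λ; and if S = ℕ then the two products are equal. -/
open scoped Classical

namespace PartArith

/-! ### Auxiliary lemmas -/

/-- `N(i,s)`: the number of partitions of `n` with parts in `S` in which the part `i`
appears at least `s` times. -/
noncomputable def Ncard (S : Set ℕ) (n i s : ℕ) : ℕ :=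
  (Finset.univ.filter
    (fun μ : {μ : Nat.Partition n // ∀ j ∈ μ.parts, j ∈ S} => s ≤ μ.1.parts.count i)).card

lemma multiset_sum_mono {s t : Multiset ℕ} (h : s ≤ t) : s.sum ≤ t.sum := by
  obtain ⟨u, rfl⟩ := Multiset.le_iff_exists_add.mp h
  simp

lemma count_mul_le {n : ℕ} (μ : Nat.Partition n) (i : ℕ) : μ.parts.count i * i ≤ n := by
  have h : Multiset.replicate (μ.parts.count i) i ≤ μ.parts :=
    Multiset.le_count_iff_replicate_le.mp le_rfl
  have := multiset_sum_mono h
  simpa [Multiset.sum_replicate, μ.parts_sum] using this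

lemma count_le {n : ℕ} (μ : Nat.Partition n) {i : ℕ} (hi : 1 ≤ i) : μ.parts.count i ≤ n :=
  le_trans (le_trans (Nat.le_mul_of_pos_right _ hi) le_rfl) (count_mul_le μ i)

lemma toFinset_subset_Icc {n : ℕ} (μ : Nat.Partition n) :
    μ.parts.toFinset ⊆ Finset.Icc 1 n := by
  intro i hi
  rw [Multiset.mem_toFinset] at hi
  have h1 : 1 ≤ i := μ.parts_pos hi
  have h2 : 1 ≤ μ.parts.count i := Multiset.one_le_count_iff_mem.mpr hi
  have := count_mul_le μ i
  rw [Finset.mem_Icc]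
  constructor
  · exact h1
  · calc i = 1 * i := (one_mul i).symm
      _ ≤ μ.parts.count i * i := Nat.mul_le_mul_right i h2
      _ ≤ n := this

lemma card_filter_le {n m : ℕ} (h : m ≤ n) :
    ((Finset.Icc 1 n).filter (fun t => t ≤ m)).card = m := by
  have : (Finset.Icc 1 n).filter (fun t => t ≤ m) = Finset.Icc 1 m := by
    ext t; simp only [Finset.mem_filter, Finset.mem_Icc]; omega
  rw [this, Nat.card_Icc]; omega

lemma eq_sum_indicator {n m : ℕ} (h : m ≤ n) :
    m = ∑ t ∈ Finset.Icc 1 n, if t ≤ m then 1 else 0 := by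
  rw [← Finset.card_filter]
  exact (card_filter_le h).symm

lemma ite_sum {α : Type*} {c : Prop} [Decidable c] (s : Finset α) (f : α → ℕ) :
    (if c then ∑ t ∈ s, f t else 0) = ∑ t ∈ s, if c then f t else 0 := by
  split_ifs <;> simp

/-- The key bijection: removing `t` copies of the part `i`. -/
lemma Ncard_eq (S : Set ℕ) {n i t : ℕ} (hiS : i ∈ S) (hi : 1 ≤ i) (ht : 1 ≤ t)
    (htn : t * i ≤ n) : Ncard S n i t = pCount S (n - t * i) := by
  rw [Ncard, pCount, ← Fintype.card_subtype]
  apply Fintype.card_congr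
  have hrep : ∀ (μ : Nat.Partition n), t ≤ μ.parts.count i → Multiset.replicate t i ≤ μ.parts :=
    fun μ h => Multiset.le_count_iff_replicate_le.mp h
  have hsub : ∀ (μ : Nat.Partition n), t ≤ μ.parts.count i →
      (μ.parts - Multiset.replicate t i).sum = n - t * i := by
    intro μ h
    have h2 := tsub_add_cancel_of_le (hrep μ h)
    have h3 := congrArg Multiset.sum h2
    rw [Multiset.sum_add, μ.parts_sum] at h3
    simp only [Multiset.sum_replicate, smul_eq_mul] at h3
    omega
  refine
    { toFun := fun μ =>
        ⟨⟨μ.1.1.parts - Multiset.replicate t i,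
          fun {j} hj => μ.1.1.parts_pos (Multiset.mem_of_le (Multiset.sub_le_self _ _) hj),
          hsub μ.1.1 μ.2⟩,
          fun j hj => μ.1.2 j (Multiset.mem_of_le (Multiset.sub_le_self _ _) hj)⟩
      invFun := fun ν =>
        ⟨⟨⟨ν.1.parts + Multiset.replicate t i,
            fun {j} hj => ?_,
            by rw [Multiset.sum_add, ν.1.parts_sum]; simp [Multiset.sum_replicate]; omega⟩,
          fun j hj => ?_⟩, by simp⟩
      left_inv := fun μ => ?_
      right_inv := fun ν => ?_ }
  · rcases Multiset.mem_add.mp hj with h | h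
    · exact ν.1.parts_pos h
    · rw [Multiset.eq_of_mem_replicate h]; omega
  · rcases Multiset.mem_add.mp hj with h | h
    · exact ν.2 j h
    · rw [Multiset.eq_of_mem_replicate h]; exact hiS
  · apply Subtype.ext; apply Subtype.ext; apply Nat.Partition.ext
    exact tsub_add_cancel_of_le (hrep μ.1.1 μ.2)
  · apply Subtype.ext; apply Nat.Partition.ext
    simp

lemma Ncard_zero_of_gt (S : Set ℕ) {n i t : ℕ} (htn : n < t * i) : Ncard S n i t = 0 := by
  rw [Ncard, Finset.card_eq_zero, Finset.filter_eq_empty_iff]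
  intro μ _ h
  have := count_mul_le μ.1 i
  have : t * i ≤ μ.1.parts.count i * i := Nat.mul_le_mul_right i h
  omega

lemma Ncard_zero_of_notS (S : Set ℕ) {n i t : ℕ} (hiS : i ∉ S) (ht : 1 ≤ t) :
    Ncard S n i t = 0 := by
  rw [Ncard, Finset.card_eq_zero, Finset.filter_eq_empty_iff]
  intro μ _ h
  exact hiS (μ.2 i (Multiset.count_pos.mp (by omega)))

lemma Ncard_formula (S : Set ℕ) {n : ℕ} (i t : ℕ) (hi : 1 ≤ i) (ht : 1 ≤ t) :
    Ncard S n i t = if i ∈ S ∧ t * i ≤ n then pCount S (n - t * i) else 0 := by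
  split_ifs with h
  · exact Ncard_eq S h.1 hi ht h.2
  · rcases Classical.em (i ∈ S) with hi2 | hi2
    · exact Ncard_zero_of_gt S (by push_neg at h; exact h hi2)
    · exact Ncard_zero_of_notS S hi2 ht

lemma aProd_fact (S : Set ℕ) (p n : ℕ) (hp : p.Prime) :
    (aProd S n).factorization p =
      ∑ i ∈ Finset.Icc 1 n, ∑ j ∈ Finset.Icc 1 n, ∑ t ∈ Finset.Icc 1 n,
        if p ^ j ∣ i then Ncard S n i t else 0 := by
  have h0 : ∀ μ : {μ : Nat.Partition n // ∀ i ∈ μ.parts, i ∈ S}, μ ∈ Finset.univ → aNum μ.1 ≠ 0 :=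
    fun μ _ => (Multiset.prod_pos fun x hx => μ.1.parts_pos hx).ne'
  have h1 : (aProd S n).factorization p
      = ∑ μ : {μ : Nat.Partition n // ∀ i ∈ μ.parts, i ∈ S}, (aNum μ.1).factorization p := by
    rw [aProd, Nat.factorization_prod h0, Finset.sum_apply']
  rw [h1]
  have h2 : ∀ μ : {μ : Nat.Partition n // ∀ i ∈ μ.parts, i ∈ S},
      (aNum μ.1).factorization p
        = ∑ i ∈ Finset.Icc 1 n, μ.1.parts.count i * i.factorization p := by
    intro μ
    rw [aNum, Finset.prod_multiset_count,
      Nat.factorization_prod (fun i hi => pow_ne_zero _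
        (μ.1.parts_pos (Multiset.mem_toFinset.mp hi)).ne'), Finset.sum_apply']
    rw [Finset.sum_subset (toFinset_subset_Icc μ.1) (fun i _ hi => by
      rw [Multiset.count_eq_zero_of_notMem (fun h => hi (Multiset.mem_toFinset.mpr h))]
      simp)]
    refine Finset.sum_congr rfl fun i hi => ?_
    rw [Nat.factorization_pow, Finsupp.smul_apply, smul_eq_mul]
  have hν : ∀ i ∈ Finset.Icc 1 n, ∀ m : ℕ,
      m * i.factorization p = ∑ j ∈ Finset.Icc 1 n, if p ^ j ∣ i then m else 0 := by
    intro i hi m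
    rcases Finset.mem_Icc.mp hi with ⟨hi1, hi2⟩
    have hne : i ≠ 0 := by omega
    have hlt : i.factorization p ≤ n := le_trans (Nat.factorization_lt p hne).le hi2
    have hfil : (Finset.Icc 1 n).filter (fun j => p ^ j ∣ i)
        = Finset.Icc 1 (i.factorization p) := by
      ext j
      simp only [Finset.mem_filter, Finset.mem_Icc,
        Nat.Prime.pow_dvd_iff_le_factorization hp hne]
      omega
    rw [← Finset.sum_filter, hfil, Finset.sum_const, Nat.card_Icc, smul_eq_mul,
      Nat.add_sub_cancel, mul_comm]
  calc ∑ μ : {μ : Nat.Partition n // ∀ i ∈ μ.parts, i ∈ S}, (aNum μ.1).factorization p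
      = ∑ μ : {μ : Nat.Partition n // ∀ i ∈ μ.parts, i ∈ S}, ∑ i ∈ Finset.Icc 1 n,
          ∑ j ∈ Finset.Icc 1 n, ∑ t ∈ Finset.Icc 1 n,
            if p ^ j ∣ i then (if t ≤ μ.1.parts.count i then 1 else 0) else 0 := by
        refine Finset.sum_congr rfl fun μ _ => ?_
        rw [h2 μ]
        refine Finset.sum_congr rfl fun i hi => ?_
        rw [hν i hi]
        refine Finset.sum_congr rfl fun j _ => ?_
        rcases Finset.mem_Icc.mp hi with ⟨hi1, _⟩
        by_cases hd : p ^ j ∣ i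
        · simp only [if_pos hd]
          exact eq_sum_indicator (count_le μ.1 hi1)
        · simp [hd]
    _ = _ := by
        rw [Finset.sum_comm]
        refine Finset.sum_congr rfl fun i _ => ?_
        rw [Finset.sum_comm]
        refine Finset.sum_congr rfl fun j _ => ?_
        rw [Finset.sum_comm]
        refine Finset.sum_congr rfl fun t _ => ?_
        rw [Ncard, Finset.card_filter, ite_sum]

lemma bProd_fact (S : Set ℕ) (p n : ℕ) (hp : p.Prime) :
    (bProd S n).factorization p =
      ∑ i ∈ Finset.Icc 1 n, ∑ j ∈ Finset.Icc 1 n, ∑ t ∈ Finset.Icc 1 n,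
        Ncard S n i (t * p ^ j) := by
  haveI : Fact p.Prime := ⟨hp⟩
  have h0 : ∀ μ : {μ : Nat.Partition n // ∀ i ∈ μ.parts, i ∈ S}, μ ∈ Finset.univ → bNum μ.1 ≠ 0 :=
    fun μ _ => Finset.prod_ne_zero_iff.mpr fun i _ => (Nat.factorial_pos _).ne'
  have h1 : (bProd S n).factorization p
      = ∑ μ : {μ : Nat.Partition n // ∀ i ∈ μ.parts, i ∈ S}, (bNum μ.1).factorization p := by
    rw [bProd, Nat.factorization_prod h0, Finset.sum_apply']
  rw [h1]
  have h2 : ∀ μ : {μ : Nat.Partition n // ∀ i ∈ μ.parts, i ∈ S},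
      (bNum μ.1).factorization p
        = ∑ i ∈ Finset.Icc 1 n, ((μ.1.parts.count i).factorial).factorization p := by
    intro μ
    rw [bNum, Nat.factorization_prod (fun i _ => (Nat.factorial_pos _).ne'), Finset.sum_apply']
    exact Finset.sum_subset (toFinset_subset_Icc μ.1) (fun i _ hi => by
      rw [Multiset.count_eq_zero_of_notMem (fun h => hi (Multiset.mem_toFinset.mpr h))]
      simp)
  calc ∑ μ : {μ : Nat.Partition n // ∀ i ∈ μ.parts, i ∈ S}, (bNum μ.1).factorization p
      = ∑ μ : {μ : Nat.Partition n // ∀ i ∈ μ.parts, i ∈ S}, ∑ i ∈ Finset.Icc 1 n,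
          ∑ j ∈ Finset.Icc 1 n, ∑ t ∈ Finset.Icc 1 n,
            if t * p ^ j ≤ μ.1.parts.count i then 1 else 0 := by
        refine Finset.sum_congr rfl fun μ _ => ?_
        rw [h2 μ]
        refine Finset.sum_congr rfl fun i hi => ?_
        rcases Finset.mem_Icc.mp hi with ⟨hi1, _⟩
        have hcle : μ.1.parts.count i ≤ n := count_le μ.1 hi1
        have hlog : Nat.log p (μ.1.parts.count i) < n + 1 :=
          lt_of_le_of_lt (le_trans (Nat.log_le_self _ _) hcle) (Nat.lt_succ_self n)
        rw [Nat.factorization_def _ hp, padicValNat_factorial hlog, Finset.Ico_add_one_right_eq_Icc]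
        refine Finset.sum_congr rfl fun j _ => ?_
        have hq : 0 < p ^ j := pow_pos hp.pos j
        have hdle : μ.1.parts.count i / p ^ j ≤ n := le_trans (Nat.div_le_self _ _) hcle
        rw [eq_sum_indicator hdle]
        refine Finset.sum_congr rfl fun t _ => ?_
        congr 1
        simp only [eq_iff_iff]
        exact Nat.le_div_iff_mul_le hq
    _ = _ := by
        rw [Finset.sum_comm]
        refine Finset.sum_congr rfl fun i _ => ?_
        rw [Finset.sum_comm]
        refine Finset.sum_congr rfl fun j _ => ?_
        rw [Finset.sum_comm]
        refine Finset.sum_congr rfl fun t _ => ?_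
        rw [Ncard, Finset.card_filter]

lemma pdiv_pow {S : Set ℕ} {p : ℕ} (hp : 2 ≤ p) (hS : PDivisible S p) :
    ∀ (j r : ℕ), 1 ≤ r → p ^ j * r ∈ S → r ∈ S := by
  intro j
  induction j with
  | zero => intro r _ h; simpa using h
  | succ j ih =>
    intro r hr h
    have h2 : p ^ j * (p * r) ∈ S := by
      rw [← mul_assoc, ← pow_succ]; exact h
    exact hS r hr (ih (p * r) (Nat.mul_pos (by omega) hr) h2)

lemma pclosed_pow {S : Set ℕ} {p : ℕ} (hC : PClosed S p) :
    ∀ (j d : ℕ), d ∈ S → p ^ j * d ∈ S := by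
  intro j
  induction j with
  | zero => intro d h; simpa using h
  | succ j ih =>
    intro d h
    have := hC _ (ih d h)
    rw [← mul_assoc, mul_comm p (p ^ j), ← pow_succ] at this
    exact this

lemma main_ineq (S : Set ℕ) (p : ℕ) (hp : p.Prime) (hS : PDivisible S p) (n : ℕ) :
    (aProd S n).factorization p ≤ (bProd S n).factorization p ∧
      (PClosed S p → (aProd S n).factorization p = (bProd S n).factorization p) := by
  set I := Finset.Icc 1 n with hI
  set T : Finset (ℕ × ℕ × ℕ) := I ×ˢ I ×ˢ I with hT
  have htriple : ∀ F : ℕ → ℕ → ℕ → ℕ,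
      ∑ x ∈ T, F x.1 x.2.1 x.2.2 = ∑ i ∈ I, ∑ j ∈ I, ∑ t ∈ I, F i j t := by
    intro F
    rw [hT, Finset.sum_product]
    exact Finset.sum_congr rfl fun i _ => Finset.sum_product _ _ _
  have hTmem : ∀ x : ℕ × ℕ × ℕ, x ∈ T →
      (1 ≤ x.1 ∧ x.1 ≤ n) ∧ (1 ≤ x.2.1 ∧ x.2.1 ≤ n) ∧ (1 ≤ x.2.2 ∧ x.2.2 ≤ n) := by
    intro x hx
    simp only [hT, hI, Finset.mem_product, Finset.mem_Icc] at hx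
    exact hx
  set A := T.filter (fun x => p ^ x.2.1 ∣ x.1 ∧ x.1 ∈ S ∧ x.2.2 * x.1 ≤ n) with hA
  set B := T.filter (fun x => x.1 ∈ S ∧ (x.2.2 * p ^ x.2.1) * x.1 ≤ n) with hB
  have hva : (aProd S n).factorization p = ∑ x ∈ A, pCount S (n - x.2.2 * x.1) := by
    rw [aProd_fact S p n hp,
      ← htriple (fun i j t => if p ^ j ∣ i then Ncard S n i t else 0), hA, Finset.sum_filter]
    refine Finset.sum_congr rfl fun x hx => ?_
    obtain ⟨⟨hi1, _⟩, _, ⟨ht1, _⟩⟩ := hTmem x hx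
    rw [Ncard_formula S x.1 x.2.2 hi1 ht1, ← ite_and]
  have hvb : (bProd S n).factorization p
      = ∑ x ∈ B, pCount S (n - (x.2.2 * p ^ x.2.1) * x.1) := by
    rw [bProd_fact S p n hp,
      ← htriple (fun i j t => Ncard S n i (t * p ^ j)), hB, Finset.sum_filter]
    refine Finset.sum_congr rfl fun x hx => ?_
    obtain ⟨⟨hi1, _⟩, _, ⟨ht1, _⟩⟩ := hTmem x hx
    rw [Ncard_formula S x.1 (x.2.2 * p ^ x.2.1) hi1
      (Nat.mul_pos ht1 (pow_pos hp.pos _))]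
  set φ : ℕ × ℕ × ℕ → ℕ × ℕ × ℕ := fun x => (x.1 / p ^ x.2.1, x.2.1, x.2.2) with hφ
  have hinj : ∀ x ∈ A, ∀ y ∈ A, φ x = φ y → x = y := by
    intro x hx y hy hxy
    have hdx : p ^ x.2.1 ∣ x.1 := (Finset.mem_filter.mp hx).2.1
    have hdy : p ^ y.2.1 ∣ y.1 := (Finset.mem_filter.mp hy).2.1
    rw [hφ, Prod.ext_iff, Prod.ext_iff] at hxy
    obtain ⟨e1, e2, e3⟩ := hxy
    simp only at e1 e2 e3
    have : x.1 = y.1 := by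
      rw [← Nat.div_mul_cancel hdx, ← Nat.div_mul_cancel hdy, e1, e2]
    exact Prod.ext this (Prod.ext e2 e3)
  have himg : A.image φ ⊆ B := by
    intro y hy
    obtain ⟨x, hx, rfl⟩ := Finset.mem_image.mp hy
    obtain ⟨hxT, hdx, hxS, hxn⟩ := Finset.mem_filter.mp hx
    obtain ⟨⟨hi1, hi2⟩, ⟨hj1, hj2⟩, ⟨ht1, ht2⟩⟩ := hTmem x hxT
    have hple : p ^ x.2.1 ≤ x.1 := Nat.le_of_dvd (by omega) hdx
    have hdiv1 : 1 ≤ x.1 / p ^ x.2.1 := (Nat.one_le_div_iff (pow_pos hp.pos _)).mpr hple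
    have hmul : p ^ x.2.1 * (x.1 / p ^ x.2.1) = x.1 := Nat.mul_div_cancel' hdx
    rw [hB, Finset.mem_filter]
    refine ⟨?_, ?_, ?_⟩
    · simp only [hT, hI, Finset.mem_product, Finset.mem_Icc, hφ]
      exact ⟨⟨hdiv1, le_trans (Nat.div_le_self _ _) hi2⟩, ⟨hj1, hj2⟩, ⟨ht1, ht2⟩⟩
    · exact pdiv_pow hp.two_le hS x.2.1 _ hdiv1 (by rw [hmul]; exact hxS)
    · show (x.2.2 * p ^ x.2.1) * (x.1 / p ^ x.2.1) ≤ n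
      rw [mul_assoc, hmul]
      exact hxn
  have hgf : ∀ x ∈ A,
      pCount S (n - (x.2.2 * p ^ x.2.1) * (x.1 / p ^ x.2.1)) = pCount S (n - x.2.2 * x.1) := by
    intro x hx
    have hdx : p ^ x.2.1 ∣ x.1 := (Finset.mem_filter.mp hx).2.1
    rw [mul_assoc, Nat.mul_div_cancel' hdx]
  have key : ∑ x ∈ A, pCount S (n - x.2.2 * x.1)
      = ∑ y ∈ A.image φ, pCount S (n - (y.2.2 * p ^ y.2.1) * y.1) := by
    rw [Finset.sum_image hinj]
    exact Finset.sum_congr rfl fun x hx => (hgf x hx).symm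
  constructor
  · rw [hva, hvb, key]
    exact Finset.sum_le_sum_of_subset himg
  · intro hC
    have heq : A.image φ = B := by
      refine Finset.Subset.antisymm himg fun y hy => ?_
      obtain ⟨hyT, hyS, hyn⟩ := Finset.mem_filter.mp hy
      obtain ⟨⟨hr1, hr2⟩, ⟨hj1, hj2⟩, ⟨ht1, ht2⟩⟩ := hTmem y hyT
      refine Finset.mem_image.mpr ⟨(y.1 * p ^ y.2.1, y.2.1, y.2.2), ?_, ?_⟩
      · rw [hA, Finset.mem_filter]
        have hle : y.1 * p ^ y.2.1 ≤ y.2.2 * p ^ y.2.1 * y.1 := by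
          calc y.1 * p ^ y.2.1 = 1 * (p ^ y.2.1 * y.1) := by ring
            _ ≤ y.2.2 * (p ^ y.2.1 * y.1) := Nat.mul_le_mul_right _ ht1
            _ = y.2.2 * p ^ y.2.1 * y.1 := by ring
        refine ⟨?_, ⟨⟨y.1, mul_comm _ _⟩, ?_, ?_⟩⟩
        · simp only [hT, hI, Finset.mem_product, Finset.mem_Icc]
          refine ⟨⟨?_, ?_⟩, ⟨hj1, hj2⟩, ⟨ht1, ht2⟩⟩
          · exact Nat.mul_pos hr1 (pow_pos hp.pos _)
          · omega
        · rw [mul_comm]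
          exact pclosed_pow hC y.2.1 y.1 hyS
        · show y.2.2 * (y.1 * p ^ y.2.1) ≤ n
          calc y.2.2 * (y.1 * p ^ y.2.1) = y.2.2 * p ^ y.2.1 * y.1 := by ring
            _ ≤ n := hyn
      · rw [hφ]
        simp only
        rw [Nat.mul_div_cancel _ (pow_pos hp.pos _)]
    rw [hva, hvb, key, heq]

lemma aProd_ne_zero (S : Set ℕ) (n : ℕ) : aProd S n ≠ 0 :=
  Finset.prod_ne_zero_iff.mpr fun μ _ =>
    (Multiset.prod_pos fun x hx => μ.1.parts_pos hx).ne'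

lemma bProd_ne_zero (S : Set ℕ) (n : ℕ) : bProd S n ≠ 0 :=
  Finset.prod_ne_zero_iff.mpr fun μ _ =>
    Finset.prod_ne_zero_iff.mpr fun i _ => (Nat.factorial_pos _).ne'

/-- **Proposition 4.3 and Corollary 4.4.** If `S ⊆ ℕ` is `p`-divisible for a prime `p`, then
`ν_p(a_{P(n,S)}) ≤ ν_p(b_{P(n,S)})` for all `n`, with equality if `S` is additionally `p`-closed.
Consequently, if `S` is `p`-divisible for all primes `p` then `a_{P(n,S)} ∣ b_{P(n,S)}`, and for
`S = ℕ` the two products are equal. -/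
theorem valuation_aProd_le_bProd :
    (∀ (S : Set ℕ) (p : ℕ), p.Prime → PDivisible S p → ∀ n : ℕ,
      (aProd S n).factorization p ≤ (bProd S n).factorization p ∧
      (PClosed S p → (aProd S n).factorization p = (bProd S n).factorization p)) ∧
    (∀ (S : Set ℕ), (∀ p : ℕ, p.Prime → PDivisible S p) → ∀ n : ℕ,
      aProd S n ∣ bProd S n) ∧
    (∀ n : ℕ, aProd Set.univ n = bProd Set.univ n) := by
  refine ⟨main_ineq, ?_, ?_⟩
  · intro S hS n
    rw [← Nat.factorization_le_iff_dvd (aProd_ne_zero S n) (bProd_ne_zero S n), Finsupp.le_def]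
    intro q
    by_cases hq : q.Prime
    · exact (main_ineq S q hq (hS q hq) n).1
    · simp [Nat.factorization_eq_zero_of_not_prime _ hq]
  · intro n
    refine (Nat.eq_iff_prime_padicValNat_eq _ _ (aProd_ne_zero _ n)
      (bProd_ne_zero _ n)).mpr fun q hq => ?_
    have := (main_ineq Set.univ q hq (fun r _ _ => Set.mem_univ r) n).2
      (fun d _ => Set.mem_univ _)
    rwa [Nat.factorization_def _ hq, Nat.factorization_def _ hq] at this

end PartArith
end
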